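/- arXiv:1607.00492 — 4 statements merged into one kernel-verified Lean document; each statement's English description precedes it below -/
import Mathlib

section
/- The Dirichlet heat kernel G on [0,1] satisfies the Gaussian upper bound: there exist positive constants K and a such that for all 0 ≤ s < t ≤ T and x, y ∈ [0,1], |G(s,t;x,y)| ≤ K (t−s)⁻¹ exp(−a|x−y|²/(t−s)). -/
open Real MeasureTheory

/-- The Dirichlet heat kernel on `[0,1]`:
`G r x y = ∑_{n ≥ 1} e^{-n²π²r} 2 sin(nπx) sin(nπy)` for `r > 0`, and `0` for `r ≤ 0`. -/
noncomputable def heatKernel (r x y : ℝ) : ℝ :=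
  if r ≤ 0 then 0 else
    ∑' n : ℕ, Real.exp (-((n : ℝ) + 1) ^ 2 * Real.pi ^ 2 * r) *
      (2 * Real.sin (((n : ℝ) + 1) * Real.pi * x) * Real.sin (((n : ℝ) + 1) * Real.pi * y))

lemma sq_shift_lower (u c : ℝ) : u ^ 2 / 2 - c ^ 2 ≤ (u + c) ^ 2 := by
  nlinarith [sq_nonneg (u + 2 * c)]

lemma summable_gauss_nat {a : ℝ} (ha : 0 < a) (c : ℝ) :
    Summable fun n : ℕ ↦ Real.exp (-a * ((n : ℝ) + c) ^ 2) := by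
  apply Summable.of_nonneg_of_le (fun n => (Real.exp_pos _).le)
    (f := fun n : ℕ => Real.exp (a * c ^ 2) * Real.exp (-(a / 2)) ^ n)
  · intro n
    rw [← Real.exp_nat_mul, ← Real.exp_add]
    apply Real.exp_le_exp.2
    have h1 := sq_shift_lower (n : ℝ) c
    have h2 : (n : ℝ) ≤ (n : ℝ) ^ 2 := by
      exact_mod_cast Nat.cast_le.2 (Nat.le_self_pow two_ne_zero n)
    nlinarith
  · exact (summable_geometric_of_lt_one (Real.exp_pos _).le
      (Real.exp_lt_one_iff.2 (by linarith))).mul_left _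

lemma summable_gauss_int {a : ℝ} (ha : 0 < a) (c : ℝ) :
    Summable fun n : ℤ ↦ Real.exp (-a * ((n : ℝ) + c) ^ 2) := by
  apply Summable.of_nat_of_neg_add_one
  · exact summable_gauss_nat ha c
  · have := summable_gauss_nat ha (1 - c)
    apply this.congr
    intro n
    push_cast
    ring_nf

open Complex in
lemma theta_transform {r : ℝ} (hr : 0 < r) (θ : ℝ) :
    ∑' n : ℤ, Real.exp (-π ^ 2 * r * (n : ℝ) ^ 2) * Real.cos (π * n * θ)
      = (1 / Real.sqrt (π * r)) * ∑' n : ℤ, Real.exp (-((n : ℝ) - θ / 2) ^ 2 / r) := by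
  have hπr : 0 < π * r := mul_pos pi_pos hr
  have ha : 0 < ((π * r : ℝ) : ℂ).re := by simpa using hπr
  have key := Complex.tsum_exp_neg_quadratic ha (Complex.I * θ / 2)
  -- rewrite the terms on the left of key
  have hL : ∀ n : ℤ, -(π : ℂ) * ((π * r : ℝ) : ℂ) * (n : ℂ) ^ 2
      + 2 * π * (Complex.I * θ / 2) * (n : ℂ)
      = ((-π ^ 2 * r * (n : ℝ) ^ 2 : ℝ) : ℂ) + ((π * n * θ : ℝ) : ℂ) * Complex.I := by
    intro n; push_cast; ring
  have hR : ∀ n : ℤ, -(π : ℂ) / ((π * r : ℝ) : ℂ)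
      * ((n : ℂ) + Complex.I * (Complex.I * θ / 2)) ^ 2
      = ((-((n : ℝ) - θ / 2) ^ 2 / r : ℝ) : ℂ) := by
    intro n
    have hI : Complex.I * (Complex.I * (θ : ℂ) / 2) = -(θ : ℂ) / 2 := by
      rw [← mul_div_assoc, ← mul_assoc, Complex.I_mul_I]; ring
    rw [hI]
    have hπ0 : (π : ℂ) ≠ 0 := by exact_mod_cast pi_ne_zero
    have hr0 : (r : ℂ) ≠ 0 := by exact_mod_cast hr.ne'
    push_cast
    field_simp
    ring
  simp_rw [hL, hR, ← Complex.ofReal_exp, ← Complex.ofReal_tsum] at key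
  have hsum : Summable fun n : ℤ ↦ Complex.exp
      (((-π ^ 2 * r * (n : ℝ) ^ 2 : ℝ) : ℂ) + ((π * n * θ : ℝ) : ℂ) * Complex.I) := by
    apply Summable.of_norm
    have : ∀ n : ℤ, ‖Complex.exp (((-π ^ 2 * r * (n : ℝ) ^ 2 : ℝ) : ℂ)
        + ((π * n * θ : ℝ) : ℂ) * Complex.I)‖
        = Real.exp (-(π ^ 2 * r) * ((n : ℝ) + 0) ^ 2) := by
      intro n
      rw [Complex.norm_exp]
      simp only [Complex.add_re, Complex.ofReal_re, Complex.mul_I_re, Complex.ofReal_im]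
      ring_nf
    rw [funext this]
    exact summable_gauss_int (by positivity) 0
  have := congrArg Complex.re key
  rw [Complex.re_tsum hsum] at this
  convert this using 2
  · ext n
    rw [Complex.exp_add, ← Complex.ofReal_exp]
    rw [Complex.re_ofReal_mul, Complex.exp_ofReal_mul_I_re]
  · -- real part of RHS
    rw [Complex.mul_re]
    have hcpow : ((π * r : ℝ) : ℂ) ^ (1 / 2 : ℂ) = ((Real.sqrt (π * r) : ℝ) : ℂ) := by
      rw [show ((1:ℂ)/2) = ((1/2 : ℝ) : ℂ) by norm_num,
        ← Complex.ofReal_cpow hπr.le, Real.sqrt_eq_rpow]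
    rw [hcpow]
    simp [Real.sqrt_eq_rpow]

lemma summable_theta {r : ℝ} (hr : 0 < r) (θ : ℝ) :
    Summable fun n : ℤ ↦ Real.exp (-π ^ 2 * r * (n : ℝ) ^ 2) * Real.cos (π * n * θ) := by
  apply Summable.of_norm_bounded (g := fun n : ℤ ↦ Real.exp (-(π ^ 2 * r) * ((n : ℝ) + 0) ^ 2))
    (summable_gauss_int (by positivity) 0)
  intro n
  rw [Real.norm_eq_abs, abs_mul, Real.abs_exp]
  calc Real.exp (-π ^ 2 * r * (n : ℝ) ^ 2) * |Real.cos (π * n * θ)|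
      ≤ Real.exp (-π ^ 2 * r * (n : ℝ) ^ 2) * 1 := by
        exact mul_le_mul_of_nonneg_left (Real.abs_cos_le_one _) (Real.exp_pos _).le
    _ = Real.exp (-(π ^ 2 * r) * ((n : ℝ) + 0) ^ 2) := by ring_nf

lemma theta_eq_nat {r : ℝ} (hr : 0 < r) (θ : ℝ) :
    ∑' n : ℤ, Real.exp (-π ^ 2 * r * (n : ℝ) ^ 2) * Real.cos (π * n * θ)
      = 1 + 2 * ∑' n : ℕ, Real.exp (-π ^ 2 * r * ((n : ℝ) + 1) ^ 2)
          * Real.cos (π * ((n : ℝ) + 1) * θ) := by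
  set f : ℤ → ℝ := fun n ↦ Real.exp (-π ^ 2 * r * (n : ℝ) ^ 2) * Real.cos (π * n * θ) with hf
  have hsum := summable_theta hr θ
  have h1 : Summable fun n : ℕ ↦ f n := hsum.comp_injective (fun a b h => by exact_mod_cast h)
  have h2 : Summable fun n : ℕ ↦ f (-(n + 1)) :=
    hsum.comp_injective (fun a b h => by omega)
  rw [tsum_of_nat_of_neg_add_one h1 h2, Summable.tsum_eq_zero_add h1]
  have e0 : f ((0 : ℕ) : ℤ) = 1 := by simp [hf]
  have e1 : ∀ n : ℕ, f (-(n + 1) : ℤ) = f ((n + 1 : ℕ) : ℤ) := by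
    intro n
    simp only [hf]
    push_cast
    simp only [neg_mul, Real.cos_neg, neg_sq, mul_neg, neg_neg, neg_add_rev]
    rw [show ((-1 : ℝ) + -(n:ℝ)) ^ 2 = ((n:ℝ) + 1) ^ 2 from by ring,
      show π * ((-1 : ℝ) + -(n:ℝ)) * θ = -(π * ((n:ℝ) + 1) * θ) from by ring, Real.cos_neg]
  have e2 : ∀ n : ℕ, f ((n + 1 : ℕ) : ℤ)
      = Real.exp (-π ^ 2 * r * ((n : ℝ) + 1) ^ 2) * Real.cos (π * ((n : ℝ) + 1) * θ) := by
    intro n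
    rw [hf]
    push_cast
    try ring_nf
    try rfl
  simp_rw [e0, e1, e2]
  ring

lemma summable_theta_nat {r : ℝ} (hr : 0 < r) (θ : ℝ) :
    Summable fun n : ℕ ↦ Real.exp (-π ^ 2 * r * ((n : ℝ) + 1) ^ 2)
      * Real.cos (π * ((n : ℝ) + 1) * θ) := by
  have h := (summable_theta hr θ).comp_injective
    (i := fun n : ℕ => (n : ℤ) + 1) (fun a b h => by simp only [add_left_inj] at h; exact_mod_cast h)
  apply h.congr
  intro n
  simp only [Function.comp_apply]
  push_cast
  norm_num

lemma heatKernel_eq {r : ℝ} (hr : 0 < r) (x y : ℝ) :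
    heatKernel r x y
      = (1 / (2 * Real.sqrt (π * r))) *
        ((∑' n : ℤ, Real.exp (-((n : ℝ) - (x - y) / 2) ^ 2 / r))
          - ∑' n : ℤ, Real.exp (-((n : ℝ) - (x + y) / 2) ^ 2 / r)) := by
  have hA := summable_theta_nat hr (x - y)
  have hB := summable_theta_nat hr (x + y)
  have hterm : ∀ n : ℕ, Real.exp (-((n : ℝ) + 1) ^ 2 * π ^ 2 * r) *
      (2 * Real.sin (((n : ℝ) + 1) * π * x) * Real.sin (((n : ℝ) + 1) * π * y))
      = Real.exp (-π ^ 2 * r * ((n : ℝ) + 1) ^ 2) * Real.cos (π * ((n : ℝ) + 1) * (x - y))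
        - Real.exp (-π ^ 2 * r * ((n : ℝ) + 1) ^ 2) * Real.cos (π * ((n : ℝ) + 1) * (x + y)) := by
    intro n
    have h := Real.cos_sub_cos (π * ((n : ℝ) + 1) * (x - y)) (π * ((n : ℝ) + 1) * (x + y))
    rw [show (π * ((n : ℝ) + 1) * (x - y) + π * ((n : ℝ) + 1) * (x + y)) / 2
          = ((n : ℝ) + 1) * π * x by ring,
        show (π * ((n : ℝ) + 1) * (x - y) - π * ((n : ℝ) + 1) * (x + y)) / 2
          = -(((n : ℝ) + 1) * π * y) by ring, Real.sin_neg] at h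
    rw [show -((n : ℝ) + 1) ^ 2 * π ^ 2 * r = -π ^ 2 * r * ((n : ℝ) + 1) ^ 2 by ring]
    linear_combination (-Real.exp (-π ^ 2 * r * ((n : ℝ) + 1) ^ 2)) * h
  have hHK : heatKernel r x y
      = (∑' n : ℕ, Real.exp (-π ^ 2 * r * ((n : ℝ) + 1) ^ 2)
          * Real.cos (π * ((n : ℝ) + 1) * (x - y)))
        - ∑' n : ℕ, Real.exp (-π ^ 2 * r * ((n : ℝ) + 1) ^ 2)
          * Real.cos (π * ((n : ℝ) + 1) * (x + y)) := by
    rw [heatKernel, if_neg (not_le.2 hr), ← Summable.tsum_sub hA hB]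
    exact tsum_congr hterm
  have h1 := theta_eq_nat hr (x - y)
  have h2 := theta_eq_nat hr (x + y)
  have h3 := theta_transform hr (x - y)
  have h4 := theta_transform hr (x + y)
  rw [h3] at h1
  rw [h4] at h2
  rw [hHK]
  have hs : 0 < Real.sqrt (π * r) := Real.sqrt_pos.2 (mul_pos pi_pos hr)
  have e : ∀ a b : ℝ, 1 / (2 * Real.sqrt (π * r)) * (a - b)
      = (1 / Real.sqrt (π * r) * a - 1 / Real.sqrt (π * r) * b) / 2 := fun a b => by ring
  rw [e, h1, h2]
  ring

lemma sum_bound {T r c d2 : ℝ} (hT : 0 < T) (hr : 0 < r) (hrT : r ≤ T) (hc : c ^ 2 ≤ 1)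
    (hd2 : 0 ≤ d2) (hlow : ∀ n : ℤ, d2 / 4 ≤ ((n : ℝ) - c) ^ 2) :
    ∑' n : ℤ, Real.exp (-((n : ℝ) - c) ^ 2 / r)
      ≤ Real.exp (-d2 / (8 * r)) * (Real.exp (1 / (2 * T))
          * ∑' n : ℤ, Real.exp (-(1 / (4 * T)) * ((n : ℝ) + 0) ^ 2)) := by
  have hsum1 : Summable fun n : ℤ ↦ Real.exp (-((n : ℝ) - c) ^ 2 / r) := by
    apply (summable_gauss_int (a := 1 / r) (by positivity) (-c)).congr
    intro n
    have : -(1 / r) * ((n : ℝ) + -c) ^ 2 = -((n : ℝ) - c) ^ 2 / r := by ring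
    rw [this]
  have hsum2 : Summable fun n : ℤ ↦ Real.exp (-(1 / (4 * T)) * ((n : ℝ) + 0) ^ 2) :=
    summable_gauss_int (by positivity) 0
  rw [← tsum_mul_left, ← tsum_mul_left]
  apply Summable.tsum_le_tsum _ hsum1 (by apply Summable.mul_left; exact hsum2.mul_left _)
  intro n
  rw [← Real.exp_add, ← Real.exp_add, Real.exp_le_exp]
  have hq := hlow n
  set q := ((n : ℝ) - c) ^ 2 with hqdef
  have hq0 : 0 ≤ q := sq_nonneg _
  have h1 : d2 / (8 * r) ≤ q / (2 * r) := by
    rw [div_le_div_iff₀ (by positivity) (by positivity)]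
    nlinarith
  have h2 : q / (2 * T) ≤ q / (2 * r) := by gcongr
  have h3 : ((n : ℝ) ^ 2 / 2 - 1) / (2 * T) ≤ q / (2 * T) := by
    gcongr
    have := sq_shift_lower ((n : ℝ)) (-c)
    nlinarith
  have e1 : -q / r = -(q / (2 * r)) - q / (2 * r) := by ring
  have e2 : ((n : ℝ) ^ 2 / 2 - 1) / (2 * T)
      = (n : ℝ) ^ 2 / (4 * T) - 1 / (2 * T) := by ring
  have e3 : -(1 / (4 * T)) * ((n : ℝ) + 0) ^ 2 = -((n : ℝ) ^ 2 / (4 * T)) := by ring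
  rw [e1, e3]
  rw [e2] at h3
  rw [show -d2 / (8 * r) = -(d2 / (8 * r)) by ring]
  linarith


/-- Gaussian upper bound for the Dirichlet heat kernel. -/
theorem heatKernel_gaussian_upper_bound (T : ℝ) (hT : 0 < T) :
    ∃ K > 0, ∃ a > 0, ∀ s t x y : ℝ, 0 ≤ s → s < t → t ≤ T →
      x ∈ Set.Icc (0 : ℝ) 1 → y ∈ Set.Icc (0 : ℝ) 1 →
      |heatKernel (t - s) x y| ≤ K * (t - s)⁻¹ * Real.exp (-a * |x - y| ^ 2 / (t - s)) := by
  set C : ℝ := Real.exp (1 / (2 * T)) * ∑' n : ℤ, Real.exp (-(1 / (4 * T)) * ((n : ℝ) + 0) ^ 2)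
    with hC
  have hCsum : Summable fun n : ℤ ↦ Real.exp (-(1 / (4 * T)) * ((n : ℝ) + 0) ^ 2) :=
    summable_gauss_int (by positivity) 0
  have hC0 : 0 < C := by
    apply mul_pos (Real.exp_pos _)
    exact Summable.tsum_pos hCsum (fun n => (Real.exp_pos _).le) 0 (Real.exp_pos _)
  refine ⟨C * Real.sqrt T / Real.sqrt π, by positivity, 1 / 8, by norm_num, ?_⟩
  intro s t x y hs hst htT hx hy
  obtain ⟨hx0, hx1⟩ := hx
  obtain ⟨hy0, hy1⟩ := hy
  set r : ℝ := t - s with hrdef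
  have hr : 0 < r := by simp [hrdef]; linarith
  have hrT : r ≤ T := by simp [hrdef]; linarith
  clear_value r
  have hsπr : 0 < Real.sqrt (π * r) := Real.sqrt_pos.2 (mul_pos pi_pos hr)
  rw [heatKernel_eq hr x y]
  have key1 : ∑' n : ℤ, Real.exp (-((n : ℝ) - (x - y) / 2) ^ 2 / r)
      ≤ Real.exp (-(x - y) ^ 2 / (8 * r)) * C := by
    apply sum_bound hT hr hrT _ (sq_nonneg _)
    · intro n
      have hcase : n ≤ -1 ∨ n = 0 ∨ 1 ≤ n := by omega
      have hn1 : n ≤ -1 → ((n : ℝ) ≤ -1) := fun h => by exact_mod_cast h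
      have hn2 : 1 ≤ n → (1 ≤ (n : ℝ)) := fun h => by exact_mod_cast h
      rcases hcase with h | h | h
      · have := hn1 h; nlinarith
      · subst h; push_cast; nlinarith
      · have := hn2 h; nlinarith
    · nlinarith
  have key2 : ∑' n : ℤ, Real.exp (-((n : ℝ) - (x + y) / 2) ^ 2 / r)
      ≤ Real.exp (-(x - y) ^ 2 / (8 * r)) * C := by
    apply sum_bound hT hr hrT _ (sq_nonneg _)
    · intro n
      have hcase : n ≤ -1 ∨ n = 0 ∨ n = 1 ∨ 2 ≤ n := by omega
      have hn1 : n ≤ -1 → ((n : ℝ) ≤ -1) := fun h => by exact_mod_cast h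
      have hn2 : 2 ≤ n → (2 ≤ (n : ℝ)) := fun h => by exact_mod_cast h
      rcases hcase with h | h | h | h
      · have := hn1 h; nlinarith
      · subst h; push_cast; nlinarith
      · subst h; push_cast; nlinarith
      · have := hn2 h; nlinarith
    · nlinarith
  have hnn1 : 0 ≤ ∑' n : ℤ, Real.exp (-((n : ℝ) - (x - y) / 2) ^ 2 / r) :=
    tsum_nonneg fun n => (Real.exp_pos _).le
  have hnn2 : 0 ≤ ∑' n : ℤ, Real.exp (-((n : ℝ) - (x + y) / 2) ^ 2 / r) :=
    tsum_nonneg fun n => (Real.exp_pos _).le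
  have habs : |(1 / (2 * Real.sqrt (π * r))) *
        ((∑' n : ℤ, Real.exp (-((n : ℝ) - (x - y) / 2) ^ 2 / r))
          - ∑' n : ℤ, Real.exp (-((n : ℝ) - (x + y) / 2) ^ 2 / r))|
      ≤ (1 / (2 * Real.sqrt (π * r))) * (2 * (Real.exp (-(x - y) ^ 2 / (8 * r)) * C)) := by
    rw [abs_mul, abs_of_pos (by positivity : (0:ℝ) < 1 / (2 * Real.sqrt (π * r)))]
    apply mul_le_mul_of_nonneg_left _ (by positivity)
    rw [abs_sub_le_iff]
    have hEC : 0 ≤ Real.exp (-(x - y) ^ 2 / (8 * r)) * C := by positivity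
    constructor <;> linarith
  clear_value C
  set E : ℝ := Real.exp (-(x - y) ^ 2 / (8 * r)) with hE
  clear_value E
  have hexp : Real.exp (-(1 / 8) * |x - y| ^ 2 / r) = E := by
    rw [hE]
    rw [sq_abs, show -(1 / 8 : ℝ) * (x - y) ^ 2 = -(x - y) ^ 2 / 8 by ring, div_div]
  rw [hexp]
  have hkey : 1 / Real.sqrt (π * r) ≤ Real.sqrt T / (Real.sqrt π * r) := by
    rw [Real.sqrt_mul pi_pos.le, div_le_div_iff₀ (by positivity) (by positivity)]
    nlinarith [mul_nonneg (mul_nonneg (Real.sqrt_nonneg π)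
        (sub_nonneg.2 (Real.sqrt_le_sqrt hrT))) (Real.sqrt_nonneg r),
      Real.mul_self_sqrt hr.le, Real.sqrt_nonneg π, Real.sqrt_pos.2 pi_pos]
  have hE0 : 0 < E := hE ▸ Real.exp_pos _
  calc |(1 / (2 * Real.sqrt (π * r))) *
        ((∑' n : ℤ, Real.exp (-((n : ℝ) - (x - y) / 2) ^ 2 / r))
          - ∑' n : ℤ, Real.exp (-((n : ℝ) - (x + y) / 2) ^ 2 / r))|
      ≤ (1 / (2 * Real.sqrt (π * r))) * (2 * (E * C)) := habs
    _ = (E * C) * (1 / Real.sqrt (π * r)) := by ring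
    _ ≤ (E * C) * (Real.sqrt T / (Real.sqrt π * r)) := by
        exact mul_le_mul_of_nonneg_left hkey (mul_nonneg hE0.le hC0.le)
    _ = C * Real.sqrt T / Real.sqrt π * r⁻¹ * E := by ring
end

section
/- Let E be a Polish space and I: E → [0,∞] a rate function. If (X_n) satisfies the Laplace principle with rate function I (as in the previous statement), then for every open set G ⊆ E, liminf_{n→∞} (1/n) log P(X_n ∈ G) ≥ −inf_{x∈G} I(x). -/
open MeasureTheory Filter Topology

/-- Laplace principle implies the large deviation lower bound: on a Polish space `E`, if
`(X_n)` satisfies the Laplace principle with rate function `I` (compact sublevel sets), then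
for every open `G`, `liminf (1/n) log P(X_n ∈ G) ≥ - inf_G I`. -/
theorem laplace_principle_implies_LDP_lower_bound
    {E : Type*} [MetricSpace E] [CompleteSpace E] [TopologicalSpace.SeparableSpace E]
    [MeasurableSpace E] [BorelSpace E]
    {Ω : Type*} [MeasurableSpace Ω] (P : Measure Ω) [IsProbabilityMeasure P]
    (X : ℕ → Ω → E) (hX : ∀ n, Measurable (X n))
    (I : E → ENNReal)
    (hlevel : ∀ M : ENNReal, M ≠ ⊤ → IsCompact {x | I x ≤ M})
    (hLaplace : ∀ h : E → ℝ, Continuous h → (∃ C, ∀ x, |h x| ≤ C) →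
      Tendsto (fun n : ℕ =>
          ((1 / (n : ℝ)) * Real.log (∫ ω, Real.exp (-(n : ℝ) * h (X n ω)) ∂P) : EReal))
        atTop (𝓝 (-(⨅ x : E, ((h x : EReal) + (I x : EReal)))))) :
    ∀ G : Set E, IsOpen G →
      -(⨅ x ∈ G, (I x : EReal)) ≤
        liminf (fun n : ℕ =>
          ((1 / (n : ℝ)) : EReal) * ENNReal.log (P {ω | X n ω ∈ G})) atTop := by
  intro G hG
  set c : ℕ → EReal := fun n =>
    ((1 / (n : ℝ)) : EReal) * ENNReal.log (P {ω | X n ω ∈ G}) with hc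
  set L : EReal := liminf c atTop with hLdef
  rw [EReal.neg_le]
  refine le_iInf₂ fun x hx => ?_
  rw [EReal.neg_le]
  by_contra hcon
  push_neg at hcon
  -- `hcon : L < -(I x)`
  have hIx_top : I x ≠ ⊤ := by
    intro h
    rw [h] at hcon
    simp at hcon
  have hIx_coe : ((I x : EReal)) = (((I x).toReal : ℝ) : EReal) := by
    rw [← EReal.toReal_coe_ennreal]
    exact (EReal.coe_toReal (by simp [hIx_top]) (by simp)).symm
  obtain ⟨j, hj⟩ := exists_nat_gt (I x).toReal
  have hIxj : (I x : EReal) < ((j : ℝ) : EReal) := by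
    rw [hIx_coe]; exact_mod_cast hj
  obtain ⟨δ, hδ, hball⟩ := Metric.isOpen_iff.1 hG x hx
  set h : E → ℝ := fun y => (j : ℝ) * min (dist y x / δ) 1 with hhdef
  have hcont : Continuous h :=
    continuous_const.mul (((continuous_id.dist continuous_const).div_const δ).min
      continuous_const)
  have hmin_mem : ∀ y : E, 0 ≤ min (dist y x / δ) 1 ∧ min (dist y x / δ) 1 ≤ 1 := by
    intro y
    constructor
    · exact le_min (by positivity) one_pos.le
    · exact min_le_right _ _
  have hnonneg : ∀ y, 0 ≤ h y := fun y =>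
    mul_nonneg (Nat.cast_nonneg j) (hmin_mem y).1
  have hle : ∀ y, h y ≤ j := fun y =>
    mul_le_of_le_one_right (Nat.cast_nonneg j) (hmin_mem y).2
  have hbd : ∃ C, ∀ y, |h y| ≤ C :=
    ⟨j, fun y => by rw [abs_of_nonneg (hnonneg y)]; exact hle y⟩
  have hx0 : h x = 0 := by simp [hhdef]
  have hout : ∀ y, y ∉ Metric.ball x δ → h y = j := by
    intro y hy
    have hd : δ ≤ dist y x := by
      simpa [Metric.mem_ball, not_lt] using hy
    have : (1 : ℝ) ≤ dist y x / δ := (one_le_div hδ).2 hd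
    simp [hhdef, min_eq_right this]
  -- the Laplace limit
  have hT := hLaplace h hcont hbd
  set A : EReal := -(⨅ y : E, ((h y : EReal) + (I y : EReal))) with hAdef
  have hAx : -(I x : EReal) ≤ A := by
    rw [hAdef, EReal.neg_le_neg_iff]
    calc (⨅ y : E, ((h y : EReal) + (I y : EReal))) ≤ (h x : EReal) + (I x : EReal) :=
          iInf_le _ x
      _ = (I x : EReal) := by rw [hx0]; simp
  -- real-valued quantities
  set r : ℕ → ℝ := fun n => ∫ ω, Real.exp (-(n : ℝ) * h (X n ω)) ∂P with hrdef
  set u : ℕ → ℝ := fun n => (P {ω | X n ω ∈ G}).toReal with hudef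
  set v : ℕ → ℝ := fun n => Real.exp (-(n : ℝ) * j) with hvdef
  have hcoe : ∀ n : ℕ, ((1 / (n : ℝ) : EReal)) = (((1 / (n : ℝ)) : ℝ) : EReal) := by
    intro n
    rw [div_eq_mul_inv, div_eq_mul_inv, one_mul, one_mul, EReal.coe_inv]
  have coe_max : ∀ a b : ℝ, ((max a b : ℝ) : EReal) = max (a : EReal) (b : EReal) := by
    intro a b
    rcases le_total a b with hab | hab
    · rw [max_eq_right hab, max_eq_right (EReal.coe_le_coe_iff.2 hab)]
    · rw [max_eq_left hab, max_eq_left (EReal.coe_le_coe_iff.2 hab)]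
  have hf_meas : ∀ n : ℕ, Measurable (fun ω => Real.exp (-(n : ℝ) * h (X n ω))) := fun n =>
    Real.measurable_exp.comp (measurable_const.mul (hcont.measurable.comp (hX n)))
  have hf_le_one : ∀ (n : ℕ) (ω : Ω), Real.exp (-(n : ℝ) * h (X n ω)) ≤ 1 := by
    intro n ω
    rw [← Real.exp_zero]
    apply Real.exp_le_exp.2
    have := hnonneg (X n ω)
    have hn : (0:ℝ) ≤ n := Nat.cast_nonneg n
    nlinarith
  have hf_int : ∀ n : ℕ, Integrable (fun ω => Real.exp (-(n : ℝ) * h (X n ω))) P := by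
    intro n
    refine (integrable_const (1:ℝ)).mono' ((hf_meas n).aestronglyMeasurable) ?_
    filter_upwards with ω
    rw [Real.norm_eq_abs, abs_of_pos (Real.exp_pos _)]
    exact hf_le_one n ω
  have hvr : ∀ n, v n ≤ r n := by
    intro n
    have hpt : ∀ ω : Ω, v n ≤ Real.exp (-(n : ℝ) * h (X n ω)) := by
      intro ω
      apply Real.exp_le_exp.2
      have := hle (X n ω)
      have hn : (0:ℝ) ≤ n := Nat.cast_nonneg n
      nlinarith
    have h1 := integral_mono (integrable_const (v n)) (hf_int n) hpt
    have h0 : ∫ (_ : Ω), v n ∂P = v n := by simp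
    rw [← h0]
    exact h1
  have hrpos : ∀ n, 0 < r n := fun n => lt_of_lt_of_le (Real.exp_pos _) (hvr n)
  have hr_le : ∀ n, r n ≤ u n + v n := by
    intro n
    have hB_meas : MeasurableSet (X n ⁻¹' Metric.ball x δ) :=
      (hX n) Metric.isOpen_ball.measurableSet
    have hg_int : Integrable (fun ω =>
        (X n ⁻¹' Metric.ball x δ).indicator (fun _ => (1:ℝ)) ω + v n) P :=
      ((integrable_const (1:ℝ)).indicator hB_meas).add (integrable_const _)
    have hpt : ∀ ω : Ω, Real.exp (-(n : ℝ) * h (X n ω)) ≤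
        (X n ⁻¹' Metric.ball x δ).indicator (fun _ => (1:ℝ)) ω + v n := by
      intro ω
      by_cases hm : X n ω ∈ Metric.ball x δ
      · rw [Set.indicator_of_mem (show ω ∈ X n ⁻¹' Metric.ball x δ from hm)]
        have := hf_le_one n ω
        have := Real.exp_pos (-(n : ℝ) * j)
        simp only [hvdef]
        linarith
      · rw [Set.indicator_of_notMem (show ω ∉ X n ⁻¹' Metric.ball x δ from hm), hout _ hm]
        simp [hvdef]
    have h1 := integral_mono (hf_int n) hg_int hpt
    have h2 : ∫ ω, ((X n ⁻¹' Metric.ball x δ).indicator (fun _ => (1:ℝ)) ω + v n) ∂P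
        = (P (X n ⁻¹' Metric.ball x δ)).toReal + v n := by
      rw [integral_add ((integrable_const (1:ℝ)).indicator hB_meas) (integrable_const _)]
      rw [integral_indicator_const (1:ℝ) hB_meas]
      simp
      rfl
    rw [h2] at h1
    have h3 : (P (X n ⁻¹' Metric.ball x δ)).toReal ≤ u n := by
      apply ENNReal.toReal_mono (measure_ne_top P _)
      exact measure_mono fun ω hω => hball hω
    calc r n ≤ (P (X n ⁻¹' Metric.ball x δ)).toReal + v n := h1
      _ ≤ u n + v n := by linarith
  -- the key eventual bound
  have Mbound : ∀ n : ℕ, 1 ≤ n →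
      (((1 / (n : ℝ)) * Real.log (r n) : ℝ) : EReal) ≤
        (((1 / (n : ℝ)) * Real.log 2 : ℝ) : EReal) + max (c n) (-((j : ℝ) : EReal)) := by
    intro n hn
    have hn0 : (0:ℝ) < n := by exact_mod_cast hn
    have hn0' : (n : ℝ) ≠ 0 := hn0.ne'
    have hinv : (0:ℝ) ≤ 1 / n := by positivity
    have hvpos : 0 < v n := Real.exp_pos _
    have hlogv : Real.log (v n) = -(n : ℝ) * j := Real.log_exp _
    have hlog2 : (0:ℝ) ≤ Real.log 2 := Real.log_nonneg one_le_two
    by_cases hP : P {ω | X n ω ∈ G} = 0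
    · -- `u n = 0`, so `c n = ⊥` and the LHS is at most `-j`
      have hu0 : u n = 0 := by simp [hudef, hP]
      have hcbot : c n = ⊥ := by
        rw [hc]
        simp only [hP, ENNReal.log_zero]
        rw [hcoe n]
        exact EReal.coe_mul_bot_of_pos (one_div_pos.2 hn0)
      have hreal : (1 / (n : ℝ)) * Real.log (r n) ≤ (1 / (n : ℝ)) * Real.log 2 + (-(j:ℝ)) := by
        have h1 : Real.log (r n) ≤ Real.log (v n) := by
          apply Real.log_le_log (hrpos n)
          have := hr_le n; rw [hu0] at this; linarith
        have h2 : (1 / (n : ℝ)) * Real.log (r n) ≤ (1 / (n : ℝ)) * (-(n : ℝ) * j) := by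
          rw [← hlogv]; exact mul_le_mul_of_nonneg_left h1 hinv
        have h3 : (1 / (n : ℝ)) * (-(n : ℝ) * j) = -(j:ℝ) := by
          field_simp
        nlinarith
      calc (((1 / (n : ℝ)) * Real.log (r n) : ℝ) : EReal)
          ≤ (((1 / (n : ℝ)) * Real.log 2 + (-(j:ℝ)) : ℝ) : EReal) := by exact_mod_cast hreal
        _ = (((1 / (n : ℝ)) * Real.log 2 : ℝ) : EReal) + ((-(j:ℝ) : ℝ) : EReal) := by
            rw [EReal.coe_add]
        _ ≤ (((1 / (n : ℝ)) * Real.log 2 : ℝ) : EReal) + max (c n) (-((j : ℝ) : EReal)) := by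
            apply add_le_add_right
            rw [EReal.coe_neg]
            exact le_max_right _ _
    · -- `u n > 0`
      have hupos : 0 < u n := ENNReal.toReal_pos hP (measure_ne_top P _)
      have hclog : c n = (((1 / (n : ℝ)) * Real.log (u n) : ℝ) : EReal) := by
        rw [hc]
        simp only [ENNReal.log_pos_real hP (measure_ne_top P _)]
        rw [hcoe n, ← EReal.coe_mul]
      have hreal : (1 / (n : ℝ)) * Real.log (r n) ≤
          (1 / (n : ℝ)) * Real.log 2 + max ((1 / (n : ℝ)) * Real.log (u n)) (-(j:ℝ)) := by
        have key : Real.log (u n + v n) ≤ Real.log 2 + max (Real.log (u n)) (Real.log (v n)) := by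
          have h1 : u n + v n ≤ 2 * max (u n) (v n) := by
            rcases le_total (u n) (v n) with hc' | hc' <;>
              [rw [max_eq_right hc']; rw [max_eq_left hc']] <;> linarith
          have hmaxpos : 0 < max (u n) (v n) := lt_of_lt_of_le hvpos (le_max_right _ _)
          have h2 : Real.log (u n + v n) ≤ Real.log (2 * max (u n) (v n)) :=
            Real.log_le_log (by linarith) h1
          rw [Real.log_mul two_ne_zero hmaxpos.ne'] at h2
          have h3 : Real.log (max (u n) (v n)) = max (Real.log (u n)) (Real.log (v n)) := by
            rcases le_total (u n) (v n) with hc' | hc'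
            · rw [max_eq_right hc', max_eq_right (Real.log_le_log hupos hc')]
            · rw [max_eq_left hc', max_eq_left (Real.log_le_log hvpos hc')]
          rw [h3] at h2
          exact h2
        have h4 : (1 / (n : ℝ)) * Real.log (r n) ≤ (1 / (n : ℝ)) * Real.log (u n + v n) :=
          mul_le_mul_of_nonneg_left (Real.log_le_log (hrpos n) (hr_le n)) hinv
        have h5 : (1 / (n : ℝ)) * Real.log (u n + v n) ≤
            (1 / (n : ℝ)) * (Real.log 2 + max (Real.log (u n)) (Real.log (v n))) :=
          mul_le_mul_of_nonneg_left key hinv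
        have h6 : (1 / (n : ℝ)) * max (Real.log (u n)) (Real.log (v n)) ≤
            max ((1 / (n : ℝ)) * Real.log (u n)) (-(j:ℝ)) := by
          rcases le_total (Real.log (u n)) (Real.log (v n)) with hc' | hc'
          · rw [max_eq_right hc', hlogv]
            have heq : (1 / (n : ℝ)) * (-(n : ℝ) * j) = -(j:ℝ) := by
              field_simp
            rw [heq]
            exact le_max_right _ _
          · rw [max_eq_left hc']
            exact le_max_left _ _
        calc (1 / (n : ℝ)) * Real.log (r n)
            ≤ (1 / (n : ℝ)) * (Real.log 2 + max (Real.log (u n)) (Real.log (v n))) :=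
              le_trans h4 h5
          _ = (1 / (n : ℝ)) * Real.log 2 + (1 / (n : ℝ)) * max (Real.log (u n)) (Real.log (v n)) := by
              ring
          _ ≤ (1 / (n : ℝ)) * Real.log 2 + max ((1 / (n : ℝ)) * Real.log (u n)) (-(j:ℝ)) := by
              linarith
      calc (((1 / (n : ℝ)) * Real.log (r n) : ℝ) : EReal)
          ≤ (((1 / (n : ℝ)) * Real.log 2 +
              max ((1 / (n : ℝ)) * Real.log (u n)) (-(j:ℝ)) : ℝ) : EReal) := by
            exact_mod_cast hreal
        _ = (((1 / (n : ℝ)) * Real.log 2 : ℝ) : EReal) +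
            ((max ((1 / (n : ℝ)) * Real.log (u n)) (-(j:ℝ)) : ℝ) : EReal) := by
            rw [EReal.coe_add]
        _ ≤ (((1 / (n : ℝ)) * Real.log 2 : ℝ) : EReal) + max (c n) (-((j : ℝ) : EReal)) := by
            apply add_le_add_right
            rw [coe_max, hclog, EReal.coe_neg]
  -- the claim: A ≤ max L (-j)
  have hclaim : A ≤ max L (-((j : ℝ) : EReal)) := by
    apply le_of_forall_gt_imp_ge_of_dense
    intro b hb
    by_cases hbtop : b = ⊤
    · rw [hbtop]; exact le_top
    have hjbot : (⊥ : EReal) < -((j : ℝ) : EReal) := by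
      rw [show -((j : ℝ) : EReal) = ((-(j:ℝ) : ℝ) : EReal) by rw [EReal.coe_neg]]
      exact EReal.bot_lt_coe _
    have hbbot : b ≠ ⊥ := by
      intro hb'
      rw [hb'] at hb
      exact absurd (lt_of_le_of_lt (le_max_right _ _) hb) (not_lt_bot)
    obtain ⟨b', hb1, hb2⟩ := exists_between hb
    have hb'top : b' ≠ ⊤ := by
      intro h'
      rw [h'] at hb2
      exact absurd hb2 (not_top_lt)
    have hb'bot : b' ≠ ⊥ := by
      intro h'
      rw [h'] at hb1
      exact absurd (lt_trans (lt_of_lt_of_le hjbot (le_max_right _ _)) hb1) (by simp)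
    set rB : ℝ := b'.toReal with hrB
    set bR : ℝ := b.toReal with hbR
    have hb'eq : (rB : EReal) = b' := EReal.coe_toReal hb'top hb'bot
    have hbeq : (bR : EReal) = b := EReal.coe_toReal hbtop hbbot
    have hbr : rB < bR := by
      rw [← EReal.coe_lt_coe_iff, hb'eq, hbeq]
      exact hb2
    have hLb' : L < b' := lt_of_le_of_lt (le_max_left _ _) hb1
    have hjb' : -((j : ℝ) : EReal) < b' := lt_of_le_of_lt (le_max_right _ _) hb1
    have hfreq : ∃ᶠ n in atTop, c n < b' :=
      frequently_lt_of_liminf_lt (by isBoundedDefault) hLb'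
    have hev : ∀ᶠ n : ℕ in atTop, 1 ≤ n ∧ (1 / (n : ℝ)) * Real.log 2 < bR - rB := by
      apply Filter.Eventually.and (eventually_ge_atTop 1)
      have htend : Tendsto (fun n : ℕ => (1 / (n : ℝ)) * Real.log 2) atTop (𝓝 0) := by
        simpa using tendsto_one_div_atTop_nhds_zero_nat.mul_const (Real.log 2)
      exact htend.eventually_lt_const (by linarith)
    have hfreq2 := hfreq.and_eventually hev
    have : ∃ᶠ n : ℕ in atTop,
        (((1 / (n : ℝ)) * Real.log (r n) : ℝ) : EReal) ≤ b := by
      apply hfreq2.mono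
      rintro n ⟨hcn, hn1, hlog2n⟩
      calc (((1 / (n : ℝ)) * Real.log (r n) : ℝ) : EReal)
          ≤ (((1 / (n : ℝ)) * Real.log 2 : ℝ) : EReal) + max (c n) (-((j : ℝ) : EReal)) :=
            Mbound n hn1
        _ ≤ (((1 / (n : ℝ)) * Real.log 2 : ℝ) : EReal) + (rB : EReal) := by
            apply add_le_add_right
            rw [hb'eq]
            exact (max_lt hcn hjb').le
        _ = (((1 / (n : ℝ)) * Real.log 2 + rB : ℝ) : EReal) := by rw [EReal.coe_add]
        _ ≤ (bR : EReal) := by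
            rw [EReal.coe_le_coe_iff]; linarith
        _ = b := hbeq
    have hliminf : liminf (fun n : ℕ =>
        (((1 / (n : ℝ)) * Real.log (r n) : ℝ) : EReal)) atTop = A := hT.liminf_eq
    rw [← hliminf]
    exact liminf_le_of_frequently_le' this
  -- contradiction
  have hfin : max L (-((j : ℝ) : EReal)) < -(I x : EReal) := by
    apply max_lt hcon
    rw [EReal.neg_lt_neg_iff]
    exact hIxj
  exact absurd (lt_of_le_of_lt (le_trans hAx hclaim) hfin) (by simp)
end

section
/- Conversely, if an E-valued sequence (X_n) satisfies the large deviation principle on a Polish space E with rate function I (upper bound over closed sets and lower bound over open sets with speed n), then for every bounded continuous h: E → ℝ, lim_{n→∞} (1/n) log E[exp(−n h(X_n))] = −inf_{x∈E} (h(x) + I(x)). -/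
open MeasureTheory Filter Topology

namespace VaradhanAux

lemma enn_coe_toReal (x : ENNReal) (h : x ≠ ⊤) : ((x.toReal : ℝ) : EReal) = (x : EReal) := by
  rw [← ENNReal.ofReal_toReal h, EReal.coe_ennreal_ofReal,
    ENNReal.toReal_ofReal ENNReal.toReal_nonneg, max_eq_left ENNReal.toReal_nonneg]

/-- If `a ≤ ε + b` for all positive real `ε`, then `a ≤ b`. -/
lemma le_of_forall_pos_le_add {a b : EReal} (h : ∀ ε : ℝ, 0 < ε → a ≤ (ε : EReal) + b) :
    a ≤ b := by
  induction b using EReal.rec with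
  | bot =>
    simpa using h 1 one_pos
  | coe r =>
    rw [← EReal.le_of_forall_lt_iff_le]
    intro z hz
    have hzr : r < z := by exact_mod_cast hz
    have h2 := h (z - r) (by linarith)
    calc a ≤ ((z - r : ℝ) : EReal) + (r : EReal) := h2
    _ = ((z : ℝ) : EReal) := by norm_cast; ring
  | top => exact le_top

/-- Distributivity of multiplication by a positive real over `real + x`. -/
lemma mul_add_distrib (r c : ℝ) (hr : 0 < r) (x : EReal) :
    (r : EReal) * ((c : EReal) + x) = ((r * c : ℝ) : EReal) + (r : EReal) * x := by
  induction x using EReal.rec with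
  | bot =>
    rw [EReal.add_bot, EReal.mul_bot_of_pos (by exact_mod_cast hr), EReal.add_bot]
  | coe y =>
    rw [← EReal.coe_add, ← EReal.coe_mul, ← EReal.coe_mul, ← EReal.coe_add,
      EReal.coe_eq_coe_iff]
    ring
  | top =>
    rw [EReal.add_top_of_ne_bot (by simp), EReal.mul_top_of_pos (by exact_mod_cast hr),
      EReal.add_top_of_ne_bot (EReal.coe_ne_bot _)]

/-- Adding a real constant, as an order isomorphism of `EReal`. -/
noncomputable def addIso (c : ℝ) : EReal ≃o EReal where
  toFun x := (c : EReal) + x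
  invFun x := ((-c : ℝ) : EReal) + x
  left_inv x := by
    induction x using EReal.rec with
    | bot => simp [EReal.add_bot]
    | coe y =>
      show ((-c : ℝ) : EReal) + ((c : EReal) + (y : EReal)) = (y : EReal)
      rw [← EReal.coe_add, ← EReal.coe_add, EReal.coe_eq_coe_iff]; ring
    | top => simp [EReal.add_top_of_ne_bot]
  right_inv x := by
    induction x using EReal.rec with
    | bot => simp [EReal.add_bot]
    | coe y =>
      show ((c : ℝ) : EReal) + (((-c : ℝ) : EReal) + (y : EReal)) = (y : EReal)
      rw [← EReal.coe_add, ← EReal.coe_add, EReal.coe_eq_coe_iff]; ring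
    | top => simp [EReal.add_top_of_ne_bot]
  map_rel_iff' := by
    intro x y
    constructor
    · intro hxy
      have h2 := add_le_add_right hxy ((-c : ℝ) : EReal)
      simp only [Equiv.coe_fn_mk] at h2
      rwa [← add_assoc, ← add_assoc,
        show ((-c : ℝ) : EReal) + (c : EReal) = 0 by norm_cast; ring,
        zero_add, zero_add] at h2
    · intro hxy
      exact add_le_add_right hxy (c : EReal)

lemma limsup_const_add (c : ℝ) (f : ℕ → EReal) :
    limsup (fun n => (c : EReal) + f n) atTop = (c : EReal) + limsup f atTop :=
  ((addIso c).limsup_apply).symm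

lemma liminf_const_add (c : ℝ) (f : ℕ → EReal) :
    liminf (fun n => (c : EReal) + f n) atTop = (c : EReal) + liminf f atTop :=
  ((addIso c).liminf_apply).symm


lemma tendsto_inv_mul_const (c : ℝ) :
    Tendsto (fun n : ℕ => ((1 / (n : ℝ) * c : ℝ) : EReal)) atTop (𝓝 (0 : EReal)) := by
  have h : Tendsto (fun n : ℕ => 1 / (n : ℝ) * c) atTop (𝓝 0) := by
    simpa using tendsto_one_div_atTop_nhds_zero_nat.mul_const c
  have h2 := EReal.tendsto_coe.2 h
  simpa using h2

lemma limsup_inv_mul_const (c : ℝ) :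
    limsup (fun n : ℕ => ((1 / (n : ℝ) * c : ℝ) : EReal)) atTop = 0 :=
  (tendsto_inv_mul_const c).limsup_eq

lemma two_seq (u v : ℕ → ENNReal) :
    limsup (fun n : ℕ => ((1 / (n : ℝ) : ℝ) : EReal) * ENNReal.log (u n + v n)) atTop ≤
      limsup (fun n : ℕ => ((1 / (n : ℝ) : ℝ) : EReal) * ENNReal.log (u n)) atTop ⊔
      limsup (fun n : ℕ => ((1 / (n : ℝ) : ℝ) : EReal) * ENNReal.log (v n)) atTop := by
  set c := Real.log 2 with hc
  have key : ∀ᶠ n : ℕ in atTop, ((1 / (n : ℝ) : ℝ) : EReal) * ENNReal.log (u n + v n) ≤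
      ((1 / (n : ℝ) * c : ℝ) : EReal) +
      (((1 / (n : ℝ) : ℝ) : EReal) * ENNReal.log (u n) ⊔
        ((1 / (n : ℝ) : ℝ) : EReal) * ENNReal.log (v n)) := by
    filter_upwards [eventually_ge_atTop 1] with n hn
    have hnpos : (0 : ℝ) < (n : ℝ) := by exact_mod_cast Nat.lt_of_lt_of_le Nat.zero_lt_one hn
    have hn' : (0 : ℝ) < 1 / (n : ℝ) := by positivity
    have hle : u n + v n ≤ 2 * (u n ⊔ v n) := by
      rw [two_mul]; exact add_le_add le_sup_left le_sup_right
    have hmono : Monotone (fun x : EReal => ((1 / (n : ℝ) : ℝ) : EReal) * x) :=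
      fun a b hab => mul_le_mul_of_nonneg_left hab (by exact_mod_cast hn'.le)
    have hlog : ENNReal.log (u n + v n) ≤
        (c : EReal) + (ENNReal.log (u n) ⊔ ENNReal.log (v n)) := by
      calc ENNReal.log (u n + v n) ≤ ENNReal.log (2 * (u n ⊔ v n)) := ENNReal.log_monotone hle
      _ = ENNReal.log 2 + ENNReal.log (u n ⊔ v n) := ENNReal.log_mul_add
      _ = (c : EReal) + (ENNReal.log (u n) ⊔ ENNReal.log (v n)) := by
          rw [show (2 : ENNReal) = ENNReal.ofReal 2 by norm_num,
            ENNReal.log_ofReal_of_pos two_pos, ENNReal.log_monotone.map_max, hc]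
    calc ((1 / (n : ℝ) : ℝ) : EReal) * ENNReal.log (u n + v n)
        ≤ ((1 / (n : ℝ) : ℝ) : EReal) *
            ((c : EReal) + (ENNReal.log (u n) ⊔ ENNReal.log (v n))) :=
          mul_le_mul_of_nonneg_left hlog (by exact_mod_cast hn'.le)
    _ = ((1 / (n : ℝ) * c : ℝ) : EReal) +
          ((1 / (n : ℝ) : ℝ) : EReal) * (ENNReal.log (u n) ⊔ ENNReal.log (v n)) :=
          mul_add_distrib _ _ hn' _
    _ = _ := by rw [hmono.map_max]
  calc limsup (fun n : ℕ => ((1 / (n : ℝ) : ℝ) : EReal) * ENNReal.log (u n + v n)) atTop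
      ≤ limsup (fun n : ℕ => ((1 / (n : ℝ) * c : ℝ) : EReal) +
          (((1 / (n : ℝ) : ℝ) : EReal) * ENNReal.log (u n) ⊔
            ((1 / (n : ℝ) : ℝ) : EReal) * ENNReal.log (v n))) atTop :=
        limsup_le_limsup key
  _ ≤ limsup (fun n : ℕ => ((1 / (n : ℝ) * c : ℝ) : EReal)) atTop +
        limsup (fun n : ℕ => ((1 / (n : ℝ) : ℝ) : EReal) * ENNReal.log (u n) ⊔
          ((1 / (n : ℝ) : ℝ) : EReal) * ENNReal.log (v n)) atTop :=
        EReal.limsup_add_le (by rw [limsup_inv_mul_const]; exact Or.inl (by simp))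
          (by rw [limsup_inv_mul_const]; exact Or.inl (by simp))
  _ = limsup (fun n : ℕ => ((1 / (n : ℝ) : ℝ) : EReal) * ENNReal.log (u n) ⊔
          ((1 / (n : ℝ) : ℝ) : EReal) * ENNReal.log (v n)) atTop := by
        rw [limsup_inv_mul_const, zero_add]
  _ = _ := limsup_max

lemma largest_term {ι : Type*} [DecidableEq ι] (s : Finset ι) (t : ι → ℕ → ENNReal) :
    limsup (fun n : ℕ => ((1 / (n : ℝ) : ℝ) : EReal) * ENNReal.log (∑ i ∈ s, t i n)) atTop ≤
      ⨆ i ∈ s, limsup (fun n : ℕ => ((1 / (n : ℝ) : ℝ) : EReal) * ENNReal.log (t i n)) atTop := by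
  induction s using Finset.induction_on with
  | empty =>
    have key : ∀ᶠ n : ℕ in atTop,
        ((1 / (n : ℝ) : ℝ) : EReal) * ENNReal.log (∑ i ∈ (∅ : Finset ι), t i n) ≤ (⊥ : EReal) := by
      filter_upwards [eventually_ge_atTop 1] with n hn
      have hnpos : (0 : ℝ) < (n : ℝ) := by exact_mod_cast Nat.lt_of_lt_of_le Nat.zero_lt_one hn
      have hn' : (0 : ℝ) < 1 / (n : ℝ) := by positivity
      rw [Finset.sum_empty, ENNReal.log_zero, EReal.mul_bot_of_pos (by exact_mod_cast hn')]
    exact le_trans (limsup_le_of_le (by isBoundedDefault) key) bot_le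
  | insert _ _ hx ih =>
    rename_i a s'
    calc limsup (fun n : ℕ =>
          ((1 / (n : ℝ) : ℝ) : EReal) * ENNReal.log (∑ i ∈ insert a s', t i n)) atTop
        = limsup (fun n : ℕ =>
            ((1 / (n : ℝ) : ℝ) : EReal) * ENNReal.log (t a n + ∑ i ∈ s', t i n)) atTop := by
          apply limsup_congr
          filter_upwards with n
          rw [Finset.sum_insert hx]
    _ ≤ _ ⊔ _ := two_seq _ _
    _ ≤ (limsup (fun n : ℕ => ((1 / (n : ℝ) : ℝ) : EReal) * ENNReal.log (t a n)) atTop) ⊔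
          (⨆ i ∈ s', limsup (fun n : ℕ =>
            ((1 / (n : ℝ) : ℝ) : EReal) * ENNReal.log (t i n)) atTop) := sup_le_sup_left ih _
    _ ≤ _ := by
          apply sup_le
          · exact le_iSup₂ (f := fun i (_ : i ∈ insert a s') =>
              limsup (fun n : ℕ => ((1 / (n : ℝ) : ℝ) : EReal) * ENNReal.log (t i n)) atTop)
              a (Finset.mem_insert_self a s')
          · exact iSup₂_le fun i hi => le_iSup₂ (f := fun i (_ : i ∈ insert a s') =>
              limsup (fun n : ℕ => ((1 / (n : ℝ) : ℝ) : EReal) * ENNReal.log (t i n)) atTop)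
              i (Finset.mem_insert_of_mem hi)



/-- The nonnegative exponential integrand is integrable and has positive integral. -/
lemma integrand_facts {Ω : Type*} [MeasurableSpace Ω] (P : MeasureTheory.Measure Ω)
    [MeasureTheory.IsProbabilityMeasure P] {g : Ω → ℝ} (hg : Measurable g) {C : ℝ}
    (hC : ∀ ω, |g ω| ≤ C) :
    MeasureTheory.Integrable (fun ω => Real.exp (g ω)) P ∧
      0 < ∫ ω, Real.exp (g ω) ∂P := by
  have hmeas : Measurable fun ω => Real.exp (g ω) := Real.measurable_exp.comp hg
  have hint : MeasureTheory.Integrable (fun ω => Real.exp (g ω)) P := by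
    refine (MeasureTheory.integrable_const (Real.exp C)).mono' hmeas.aestronglyMeasurable ?_
    filter_upwards with ω
    rw [Real.norm_eq_abs, abs_of_pos (Real.exp_pos _)]
    exact Real.exp_le_exp.2 (le_trans (le_abs_self _) (hC ω))
  refine ⟨hint, ?_⟩
  have h1 : ∫ ω, Real.exp (-C) ∂P ≤ ∫ ω, Real.exp (g ω) ∂P := by
    refine MeasureTheory.integral_mono (MeasureTheory.integrable_const _) hint fun ω => ?_
    exact Real.exp_le_exp.2 (neg_le_of_abs_le (hC ω))
  have h2 : ∫ ω, Real.exp (-C) ∂P = Real.exp (-C) := by simp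
  linarith [Real.exp_pos (-C)]

end VaradhanAux

/-- Varadhan's lemma for bounded continuous functions: if `(X_n)` satisfies the LDP on a
Polish space `E` with rate function `I`, then for every bounded continuous `h`,
`(1/n) log E[exp(-n h(X_n))] → - inf_E (h + I)`. -/
theorem LDP_implies_laplace_principle
    {E : Type*} [MetricSpace E] [CompleteSpace E] [TopologicalSpace.SeparableSpace E]
    [MeasurableSpace E] [BorelSpace E]
    {Ω : Type*} [MeasurableSpace Ω] (P : Measure Ω) [IsProbabilityMeasure P]
    (X : ℕ → Ω → E) (hX : ∀ n, Measurable (X n))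
    (I : E → ENNReal)
    (hlevel : ∀ M : ENNReal, M ≠ ⊤ → IsCompact {x | I x ≤ M})
    (hupper : ∀ F : Set E, IsClosed F →
      limsup (fun n : ℕ =>
          ((1 / (n : ℝ)) : EReal) * ENNReal.log (P {ω | X n ω ∈ F})) atTop ≤
        -(⨅ x ∈ F, (I x : EReal)))
    (hlower : ∀ G : Set E, IsOpen G →
      -(⨅ x ∈ G, (I x : EReal)) ≤
        liminf (fun n : ℕ =>
          ((1 / (n : ℝ)) : EReal) * ENNReal.log (P {ω | X n ω ∈ G})) atTop) :
    ∀ h : E → ℝ, Continuous h → (∃ C, ∀ x, |h x| ≤ C) →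
      Tendsto (fun n : ℕ =>
          ((1 / (n : ℝ)) * Real.log (∫ ω, Real.exp (-(n : ℝ) * h (X n ω)) ∂P) : EReal))
        atTop (𝓝 (-(⨅ x : E, ((h x : EReal) + (I x : EReal))))) := by
  classical
  intro h hcont hbound
  obtain ⟨C, hC⟩ := hbound
  -- nonemptiness
  have hΩ : Nonempty Ω := by
    by_contra hΩ
    rw [not_nonempty_iff] at hΩ
    have h1 : P Set.univ = 1 := measure_univ
    rw [Set.univ_eq_empty_iff.2 hΩ] at h1
    simp at h1
  have hE : Nonempty E := ⟨X 0 hΩ.some⟩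
  have hC0 : 0 ≤ C := le_trans (abs_nonneg _) (hC hE.some)
  set Λ : EReal := ⨅ x : E, ((h x : EReal) + (I x : EReal)) with hΛdef
  have hΛbot : Λ ≠ ⊥ := by
    have hbound : ((-C : ℝ) : EReal) ≤ Λ := by
      refine le_iInf fun x => ?_
      calc ((-C : ℝ) : EReal) ≤ ((h x : ℝ) : EReal) := by
            exact_mod_cast neg_le_of_abs_le (hC x)
      _ ≤ (h x : EReal) + (I x : EReal) :=
            le_add_of_nonneg_right (EReal.coe_ennreal_nonneg (I x))
    intro hcon
    rw [hcon] at hbound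
    exact (EReal.coe_ne_bot (-C)) (le_bot_iff.1 hbound)
  -- the integrand
  have hgmeas : ∀ n : ℕ, Measurable fun ω => -(n : ℝ) * h (X n ω) :=
    fun n => measurable_const.mul (hcont.measurable.comp (hX n))
  have hgbound : ∀ n : ℕ, ∀ ω, |(-(n : ℝ) * h (X n ω))| ≤ (n : ℝ) * C := by
    intro n ω
    rw [abs_mul, abs_neg, Nat.abs_cast]
    exact mul_le_mul_of_nonneg_left (hC _) (Nat.cast_nonneg n)
  have hfint : ∀ n : ℕ, Integrable (fun ω => Real.exp (-(n : ℝ) * h (X n ω))) P :=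
    fun n => (VaradhanAux.integrand_facts P (hgmeas n) (hgbound n)).1
  set A : ℕ → ℝ := fun n => ∫ ω, Real.exp (-(n : ℝ) * h (X n ω)) ∂P with hAdef
  have hApos : ∀ n : ℕ, 0 < A n :=
    fun n => (VaradhanAux.integrand_facts P (hgmeas n) (hgbound n)).2
  have hlogA : ∀ n : ℕ, ((Real.log (A n) : ℝ) : EReal) = ENNReal.log (ENNReal.ofReal (A n)) :=
    fun n => (ENNReal.log_ofReal_of_pos (hApos n)).symm
  set L : ℕ → EReal :=
    fun n : ℕ => ((1 / (n : ℝ)) * Real.log (A n) : EReal) with hLdef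
  -- lower bound
  have hlowx : ∀ x : E, -((h x : EReal) + (I x : EReal)) ≤ liminf L atTop := by
    intro x
    by_cases hIx : I x = ⊤
    · have : (h x : EReal) + (I x : EReal) = ⊤ := by
        rw [hIx]
        exact EReal.add_top_of_ne_bot (EReal.coe_ne_bot _)
      rw [this]
      simp
    · apply VaradhanAux.le_of_forall_pos_le_add
      intro ε hε
      set G : Set E := h ⁻¹' (Set.Iio (h x + ε)) with hGdef
      have hGopen : IsOpen G := isOpen_Iio.preimage hcont
      have hxG : x ∈ G := by
        simp only [hGdef, Set.mem_preimage, Set.mem_Iio]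
        linarith
      -- pointwise estimate
      have hkey : ∀ᶠ n : ℕ in atTop,
          ((-(h x + ε) : ℝ) : EReal) +
            ((1 / (n : ℝ)) : EReal) * ENNReal.log (P {ω | X n ω ∈ G}) ≤ L n := by
        filter_upwards [eventually_ge_atTop 1] with n hn
        have hnpos : (0 : ℝ) < (n : ℝ) := by exact_mod_cast Nat.lt_of_lt_of_le Nat.zero_lt_one hn
        have hn' : (0 : ℝ) < 1 / (n : ℝ) := by positivity
        set p := P {ω | X n ω ∈ G} with hpdef
        by_cases hp : p = 0
        · rw [hp, ENNReal.log_zero,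
            show ((1 / (n : ℝ)) : EReal) = ((1 / (n : ℝ) : ℝ) : EReal) from rfl,
            EReal.mul_bot_of_pos (by exact_mod_cast hn'), EReal.add_bot]
          exact bot_le
        · have hptop : p ≠ ⊤ := measure_ne_top P _
          have hptr : 0 < p.toReal := ENNReal.toReal_pos hp hptop
          have hS : MeasurableSet {ω | X n ω ∈ G} := (hX n) hGopen.measurableSet
          have hconst : ∀ ω ∈ {ω | X n ω ∈ G},
              Real.exp (-(n : ℝ) * (h x + ε)) ≤ Real.exp (-(n : ℝ) * h (X n ω)) := by
            intro ω hω
            have hlt : h (X n ω) < h x + ε := hω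
            exact Real.exp_le_exp.2 (by nlinarith)
          have h1 : Real.exp (-(n : ℝ) * (h x + ε)) * p.toReal ≤ A n := by
            calc Real.exp (-(n : ℝ) * (h x + ε)) * p.toReal
                ≤ ∫ ω in {ω | X n ω ∈ G}, Real.exp (-(n : ℝ) * h (X n ω)) ∂P :=
                  setIntegral_ge_of_const_le_real hS (measure_ne_top P _) hconst
                    (hfint n).integrableOn
            _ ≤ A n := setIntegral_le_integral (hfint n)
                  (Filter.Eventually.of_forall fun ω => (Real.exp_pos _).le)
          have h2 : -(n : ℝ) * (h x + ε) + Real.log p.toReal ≤ Real.log (A n) := by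
            have := Real.log_le_log (by positivity) h1
            rwa [Real.log_mul (Real.exp_ne_zero _) (ne_of_gt hptr), Real.log_exp] at this
          have h3 : -(h x + ε) + (1 / (n : ℝ)) * Real.log p.toReal
              ≤ (1 / (n : ℝ)) * Real.log (A n) := by
            have hmul := mul_le_mul_of_nonneg_left h2 hn'.le
            have hne : (n : ℝ) ≠ 0 := ne_of_gt hnpos
            calc -(h x + ε) + (1 / (n : ℝ)) * Real.log p.toReal
                = (1 / (n : ℝ)) * (-(n : ℝ) * (h x + ε) + Real.log p.toReal) := by
                  field_simp
            _ ≤ (1 / (n : ℝ)) * Real.log (A n) := hmul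
          have hlogp : ENNReal.log p = ((Real.log p.toReal : ℝ) : EReal) :=
            ENNReal.log_pos_real' hptr
          show ((-(h x + ε) : ℝ) : EReal) +
              ((1 / (n : ℝ) : ℝ) : EReal) * ENNReal.log p ≤
              ((1 / (n : ℝ) : ℝ) : EReal) * ((Real.log (A n) : ℝ) : EReal)
          rw [hlogp, ← EReal.coe_mul, ← EReal.coe_mul, ← EReal.coe_add, EReal.coe_le_coe_iff]
          exact h3
      -- take liminf
      have h4 : ((-(h x + ε) : ℝ) : EReal) +
          liminf (fun n : ℕ =>
            ((1 / (n : ℝ)) : EReal) * ENNReal.log (P {ω | X n ω ∈ G})) atTop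
          ≤ liminf L atTop := by
        rw [← VaradhanAux.liminf_const_add]
        exact liminf_le_liminf hkey
      have h5 : -(I x : EReal) ≤
          -(⨅ y ∈ G, (I y : EReal)) := by
        apply EReal.neg_le_neg_iff.2
        exact iInf₂_le x hxG
      have h6 : ((-(h x + ε) : ℝ) : EReal) + -(I x : EReal) ≤ liminf L atTop := by
        refine le_trans (add_le_add_right (le_trans h5 (hlower G hGopen)) _) h4
      -- arithmetic wrap-up
      have hIreal : (I x : EReal) = (((I x).toReal : ℝ) : EReal) :=
        (VaradhanAux.enn_coe_toReal _ hIx).symm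
      have heq1 : -((h x : EReal) + (I x : EReal)) =
          ((-(h x + (I x).toReal) : ℝ) : EReal) := by
        rw [hIreal, ← EReal.coe_add, ← EReal.coe_neg]
      have heq2 : ((-(h x + ε) : ℝ) : EReal) + -(I x : EReal) =
          ((-(h x + ε) - (I x).toReal : ℝ) : EReal) := by
        rw [hIreal, ← EReal.coe_neg, ← EReal.coe_add, EReal.coe_eq_coe_iff]
        ring
      calc -((h x : EReal) + (I x : EReal))
          = ((-(h x + (I x).toReal) : ℝ) : EReal) := heq1
      _ = ((ε : ℝ) : EReal) + ((-(h x + ε) - (I x).toReal : ℝ) : EReal) := by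
          rw [← EReal.coe_add, EReal.coe_eq_coe_iff]
          ring
      _ = ((ε : ℝ) : EReal) + (((-(h x + ε) : ℝ) : EReal) + -(I x : EReal)) := by rw [heq2]
      _ ≤ ((ε : ℝ) : EReal) + liminf L atTop := add_le_add_right h6 _
  have hlow : -Λ ≤ liminf L atTop := by
    by_cases hΛtop : Λ = ⊤
    · rw [hΛtop]
      simp
    · apply VaradhanAux.le_of_forall_pos_le_add
      intro ε hε
      obtain ⟨rΛ, hrΛ⟩ : ∃ r : ℝ, Λ = (r : EReal) := by
        lift Λ to ℝ using ⟨hΛtop, hΛbot⟩ with r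
        exact ⟨r, rfl⟩
      have hlt : Λ < Λ + (ε : EReal) := by
        rw [hrΛ, ← EReal.coe_add]
        exact_mod_cast lt_add_of_pos_right rΛ hε
      obtain ⟨x, hx⟩ : ∃ x : E, (h x : EReal) + (I x : EReal) < Λ + (ε : EReal) := by
        have := hlt
        rw [hΛdef] at this
        exact iInf_lt_iff.1 (lt_of_le_of_lt (le_of_eq hΛdef.symm) hlt)
      have hIx : I x ≠ ⊤ := by
        intro hcon
        rw [hcon, EReal.coe_ennreal_top, EReal.add_top_of_ne_bot (EReal.coe_ne_bot _)] at hx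
        rw [hrΛ, ← EReal.coe_add] at hx
        exact (not_top_lt) hx
      have hIreal : (I x : EReal) = (((I x).toReal : ℝ) : EReal) :=
        (VaradhanAux.enn_coe_toReal _ hIx).symm
      have hxr : h x + (I x).toReal < rΛ + ε := by
        have := hx
        rw [hIreal, hrΛ, ← EReal.coe_add, ← EReal.coe_add, EReal.coe_lt_coe_iff] at this
        exact this
      calc -Λ = ((-rΛ : ℝ) : EReal) := by rw [hrΛ, ← EReal.coe_neg]
      _ ≤ ((ε : ℝ) : EReal) + ((-(h x + (I x).toReal) : ℝ) : EReal) := by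
          rw [← EReal.coe_add, EReal.coe_le_coe_iff]
          linarith
      _ = ((ε : ℝ) : EReal) + -((h x : EReal) + (I x : EReal)) := by
          rw [hIreal]
          norm_cast
      _ ≤ ((ε : ℝ) : EReal) + liminf L atTop := add_le_add_right (hlowx x) _
  have hup : limsup L atTop ≤ -Λ := by
    apply VaradhanAux.le_of_forall_pos_le_add
    intro ε hε
    set N : ℕ := ⌈2 * C / ε⌉₊ + 1 with hNdef
    have hN1 : 1 ≤ N := Nat.le_add_left 1 _
    set a : ℕ → ℝ := fun i => -C + i * ε with hadef
    set F : ℕ → Set E := fun i => h ⁻¹' (Set.Icc (a i) (a i + ε)) with hFdef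
    have hFclosed : ∀ i, IsClosed (F i) := fun i => isClosed_Icc.preimage hcont
    have hNe : 2 * C ≤ (N : ℝ) * ε := by
      have h1 : 2 * C / ε ≤ (⌈2 * C / ε⌉₊ : ℝ) := Nat.le_ceil _
      have h2 : (⌈2 * C / ε⌉₊ : ℝ) ≤ (N : ℝ) := by
        rw [hNdef]
        push_cast
        linarith
      have h3 : 2 * C / ε ≤ (N : ℝ) := le_trans h1 h2
      calc 2 * C = 2 * C / ε * ε := by field_simp
      _ ≤ (N : ℝ) * ε := mul_le_mul_of_nonneg_right h3 hε.le
    have hcover : ∀ y : E, ∃ i : Fin N, y ∈ F i := by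
      intro y
      have hy1 : -C ≤ h y := neg_le_of_abs_le (hC y)
      have hy2 : h y ≤ C := le_of_abs_le (hC y)
      set j : ℕ := ⌊(h y + C) / ε⌋₊ with hjdef
      have h0 : (0 : ℝ) ≤ (h y + C) / ε := div_nonneg (by linarith) hε.le
      have hfl : (j : ℝ) ≤ (h y + C) / ε := Nat.floor_le h0
      have hfl' : (h y + C) / ε < (j : ℝ) + 1 := Nat.lt_floor_add_one _
      refine ⟨⟨min j (N - 1), Nat.lt_of_le_of_lt (min_le_right _ _) (by omega)⟩, ?_⟩
      show h y ∈ Set.Icc (a (min j (N - 1))) (a (min j (N - 1)) + ε)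
      rcases le_or_gt j (N - 1) with hc | hc
      · rw [min_eq_left hc]
        constructor
        · have : (j : ℝ) * ε ≤ h y + C := (le_div_iff₀ hε).1 hfl
          simp only [hadef]
          linarith
        · have : h y + C < ((j : ℝ) + 1) * ε := (div_lt_iff₀ hε).1 hfl'
          simp only [hadef]
          nlinarith
      · rw [min_eq_right hc.le]
        have hcast : ((N - 1 : ℕ) : ℝ) = (N : ℝ) - 1 := by
          rw [Nat.cast_sub hN1]
          norm_num
        constructor
        · have hle : ((N - 1 : ℕ) : ℝ) ≤ (j : ℝ) := by
            exact_mod_cast hc.le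
          have : ((N - 1 : ℕ) : ℝ) * ε ≤ h y + C := by
            calc ((N - 1 : ℕ) : ℝ) * ε ≤ (j : ℝ) * ε :=
                  mul_le_mul_of_nonneg_right hle hε.le
            _ ≤ h y + C := (le_div_iff₀ hε).1 hfl
          simp only [hadef]
          linarith
        · simp only [hadef]
          rw [hcast]
          nlinarith
    set t : Fin N → ℕ → ENNReal := fun i n =>
      ENNReal.ofReal (Real.exp (-(n : ℝ) * a i)) * P {ω | X n ω ∈ F i} with htdef
    have hsum : ∀ n : ℕ, ENNReal.ofReal (A n) ≤ ∑ i : Fin N, t i n := by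
      intro n
      have hnn : 0 ≤ᵐ[P] fun ω => Real.exp (-(n : ℝ) * h (X n ω)) :=
        Filter.Eventually.of_forall fun ω => (Real.exp_pos _).le
      rw [show A n = ∫ ω, Real.exp (-(n : ℝ) * h (X n ω)) ∂P from rfl,
        ofReal_integral_eq_lintegral_ofReal (hfint n) hnn]
      have huniv : (Set.univ : Set Ω) ⊆ ⋃ i : Fin N, {ω | X n ω ∈ F i} := by
        intro ω _
        obtain ⟨i, hi⟩ := hcover (X n ω)
        exact Set.mem_iUnion.2 ⟨i, hi⟩
      calc ∫⁻ ω, ENNReal.ofReal (Real.exp (-(n : ℝ) * h (X n ω))) ∂P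
          = ∫⁻ ω in Set.univ, ENNReal.ofReal (Real.exp (-(n : ℝ) * h (X n ω))) ∂P := by
            rw [setLIntegral_univ]
      _ ≤ ∫⁻ ω in ⋃ i : Fin N, {ω | X n ω ∈ F i},
            ENNReal.ofReal (Real.exp (-(n : ℝ) * h (X n ω))) ∂P :=
            lintegral_mono_set huniv
      _ ≤ ∑' i : Fin N, ∫⁻ ω in {ω | X n ω ∈ F i},
            ENNReal.ofReal (Real.exp (-(n : ℝ) * h (X n ω))) ∂P :=
            lintegral_iUnion_le _ _
      _ = ∑ i : Fin N, ∫⁻ ω in {ω | X n ω ∈ F i},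
            ENNReal.ofReal (Real.exp (-(n : ℝ) * h (X n ω))) ∂P := tsum_fintype _
      _ ≤ ∑ i : Fin N, t i n := by
            refine Finset.sum_le_sum fun i _ => ?_
            calc ∫⁻ ω in {ω | X n ω ∈ F i},
                  ENNReal.ofReal (Real.exp (-(n : ℝ) * h (X n ω))) ∂P
                ≤ ∫⁻ _ in {ω | X n ω ∈ F i},
                  ENNReal.ofReal (Real.exp (-(n : ℝ) * a i)) ∂P := by
                  refine setLIntegral_mono measurable_const fun ω hω => ?_
                  have hω' : a i ≤ h (X n ω) := (hω : X n ω ∈ F i).1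
                  refine ENNReal.ofReal_le_ofReal (Real.exp_le_exp.2 ?_)
                  have hn0 : (0 : ℝ) ≤ (n : ℝ) := Nat.cast_nonneg n
                  nlinarith
            _ = t i n := by rw [setLIntegral_const]
    have hstep1 : limsup L atTop ≤ limsup (fun n : ℕ =>
        ((1 / (n : ℝ) : ℝ) : EReal) * ENNReal.log (∑ i : Fin N, t i n)) atTop := by
      have hptwise : ∀ n : ℕ, L n ≤
          ((1 / (n : ℝ) : ℝ) : EReal) * ENNReal.log (∑ i : Fin N, t i n) := by
        intro n
        show ((1 / (n : ℝ) : ℝ) : EReal) * ((Real.log (A n) : ℝ) : EReal) ≤ _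
        rw [hlogA n]
        refine mul_le_mul_of_nonneg_left (ENNReal.log_monotone (hsum n)) ?_
        exact_mod_cast (by positivity : (0 : ℝ) ≤ 1 / (n : ℝ))
      exact limsup_le_limsup (Filter.Eventually.of_forall hptwise)
    have hper : ∀ i : Fin N, limsup (fun n : ℕ =>
        ((1 / (n : ℝ) : ℝ) : EReal) * ENNReal.log (t i n)) atTop ≤ (ε : EReal) + -Λ := by
      intro i
      have hup_i := hupper (F i) (hFclosed i)
      have hcongr : limsup (fun n : ℕ =>
          ((1 / (n : ℝ) : ℝ) : EReal) * ENNReal.log (t i n)) atTop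
          = ((-(a i) : ℝ) : EReal) + limsup (fun n : ℕ =>
            ((1 / (n : ℝ)) : EReal) * ENNReal.log (P {ω | X n ω ∈ F i})) atTop := by
        rw [← VaradhanAux.limsup_const_add]
        apply limsup_congr
        filter_upwards [eventually_ge_atTop 1] with n hn
        have hnpos : (0 : ℝ) < (n : ℝ) := by
          exact_mod_cast Nat.lt_of_lt_of_le Nat.zero_lt_one hn
        have hn' : (0 : ℝ) < 1 / (n : ℝ) := by positivity
        have hlogt : ENNReal.log (t i n) =
            ((-(n : ℝ) * a i : ℝ) : EReal) + ENNReal.log (P {ω | X n ω ∈ F i}) := by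
          rw [htdef]
          rw [ENNReal.log_mul_add, ENNReal.log_ofReal_of_pos (Real.exp_pos _), Real.log_exp]
        rw [hlogt, VaradhanAux.mul_add_distrib _ _ hn',
          show (1 / (n : ℝ) * (-(n : ℝ) * a i) : ℝ) = -(a i) by field_simp]
        rfl
      rw [hcongr]
      refine le_trans (add_le_add_right hup_i _) ?_
      set m := ⨅ x ∈ F i, ((I x : ENNReal) : EReal) with hmdef
      by_cases hm : m = ⊤
      · rw [hm]
        rw [show -(⊤ : EReal) = ⊥ from rfl, EReal.add_bot]
        exact bot_le
      · apply VaradhanAux.le_of_forall_pos_le_add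
        intro ε' hε'
        have hm0 : (0 : EReal) ≤ m := le_iInf₂ fun x _ => EReal.coe_ennreal_nonneg _
        have hmbot : m ≠ ⊥ := fun hcon => by
          rw [hcon] at hm0
          simp at hm0
        obtain ⟨rm, hrm⟩ : ∃ r : ℝ, m = (r : EReal) := by
          lift m to ℝ using ⟨hm, hmbot⟩ with r
          exact ⟨r, rfl⟩
        have hlt : m < m + (ε' : EReal) := by
          rw [hrm, ← EReal.coe_add]
          exact_mod_cast lt_add_of_pos_right rm hε'
        obtain ⟨x, hxlt⟩ := iInf_lt_iff.1 (lt_of_le_of_lt (le_of_eq hmdef.symm) hlt)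
        obtain ⟨hxF, hxlt⟩ := iInf_lt_iff.1 hxlt
        have hIx : I x ≠ ⊤ := by
          intro hcon
          rw [hcon, EReal.coe_ennreal_top, hrm, ← EReal.coe_add] at hxlt
          exact not_top_lt hxlt
        have hIreal : ((I x : ENNReal) : EReal) = (((I x).toReal : ℝ) : EReal) :=
          (VaradhanAux.enn_coe_toReal _ hIx).symm
        have hIxle : (I x).toReal ≤ rm + ε' := by
          rw [hIreal, hrm, ← EReal.coe_add, EReal.coe_lt_coe_iff] at hxlt
          exact hxlt.le
        have hhx1 : a i ≤ h x := (hxF : x ∈ F i).1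
        have hhx2 : h x ≤ a i + ε := (hxF : x ∈ F i).2
        have hΛle : Λ ≤ ((h x + (I x).toReal : ℝ) : EReal) := by
          rw [EReal.coe_add, ← hIreal]
          exact iInf_le _ x
        have hΛtop : Λ ≠ ⊤ := fun hcon => by
          rw [hcon] at hΛle
          exact (EReal.coe_lt_top _).not_ge hΛle
        obtain ⟨rΛ, hrΛ⟩ : ∃ r : ℝ, Λ = (r : EReal) := by
          lift Λ to ℝ using ⟨hΛtop, hΛbot⟩ with r
          exact ⟨r, rfl⟩
        have hrle : rΛ ≤ h x + (I x).toReal := by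
          rw [hrΛ, EReal.coe_le_coe_iff] at hΛle
          exact hΛle
        show ((-(a i) : ℝ) : EReal) + -m ≤ (ε' : EReal) + ((ε : EReal) + -Λ)
        rw [hrm, hrΛ, ← EReal.coe_neg, ← EReal.coe_neg, ← EReal.coe_add, ← EReal.coe_add,
          ← EReal.coe_add, EReal.coe_le_coe_iff]
        linarith
    calc limsup L atTop ≤ limsup (fun n : ℕ =>
        ((1 / (n : ℝ) : ℝ) : EReal) * ENNReal.log (∑ i : Fin N, t i n)) atTop := hstep1
    _ ≤ ⨆ i ∈ (Finset.univ : Finset (Fin N)), limsup (fun n : ℕ =>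
        ((1 / (n : ℝ) : ℝ) : EReal) * ENNReal.log (t i n)) atTop :=
        VaradhanAux.largest_term Finset.univ t
    _ ≤ (ε : EReal) + -Λ := iSup₂_le fun i _ => hper i
  exact tendsto_of_le_liminf_of_limsup_le hlow hup
end

section
/- Let G be the Dirichlet heat kernel on [0,1]. Then there exist ᾱ ∈ (0, 1/2) such that for every α < ᾱ there is a constant K̄(α) with ∫₀ᵀ∫₀¹ |G_{t−τ}(x,η) − G_{s−τ}(y,η)|² dη dτ ≤ K̄(α) ρ((t,x),(s,y))^{2α} for all 0 < s < t < T and x, y ∈ [0,1], where ρ is the Euclidean distance on [0,T]×[0,1] and G_{r}( ·,·) is interpreted as 0 for r ≤ 0. -/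
open Real MeasureTheory

noncomputable def lam (n : ℕ) : ℝ := ((n : ℝ) + 1) ^ 2 * Real.pi ^ 2

noncomputable def EE (r : ℝ) (n : ℕ) : ℝ := if r ≤ 0 then 0 else Real.exp (-lam n * r)

noncomputable def es (n : ℕ) (x : ℝ) : ℝ := Real.sqrt 2 * Real.sin (((n : ℝ) + 1) * Real.pi * x)

lemma lam_pos (n : ℕ) : 0 < lam n := by
  have : (0:ℝ) < (n:ℝ) + 1 := by positivity
  have := Real.pi_pos
  unfold lam; positivity

lemma EE_nonneg (r : ℝ) (n : ℕ) : 0 ≤ EE r n := by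
  unfold EE; split <;> positivity

lemma EE_le_one (r : ℝ) (n : ℕ) : EE r n ≤ 1 := by
  unfold EE; split
  · norm_num
  · rename_i h
    push_neg at h
    rw [← Real.exp_zero]
    apply Real.exp_le_exp.2
    have := (lam_pos n).le
    nlinarith

lemma abs_es_le (n : ℕ) (x : ℝ) : |es n x| ≤ Real.sqrt 2 := by
  unfold es
  rw [abs_mul, abs_of_nonneg (Real.sqrt_nonneg 2)]
  nlinarith [Real.abs_sin_le_one (((n : ℝ) + 1) * Real.pi * x), Real.sqrt_nonneg 2,
    abs_nonneg (Real.sin (((n : ℝ) + 1) * Real.pi * x))]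

lemma es_sq_le (n : ℕ) (x : ℝ) : es n x ^ 2 ≤ 2 := by
  have h := abs_es_le n x
  have h2 : Real.sqrt 2 ^ 2 = 2 := Real.sq_sqrt (by norm_num)
  calc es n x ^ 2 = |es n x| ^ 2 := (sq_abs _).symm
    _ ≤ Real.sqrt 2 ^ 2 := by nlinarith [abs_nonneg (es n x)]
    _ = 2 := h2

lemma summable_EE (r : ℝ) : Summable (fun n => EE r n) := by
  by_cases hr : r ≤ 0
  · have h0 : (fun n => EE r n) = fun _ => (0:ℝ) := funext fun n => if_pos hr
    rw [h0]; exact summable_zero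
  · push_neg at hr
    refine Summable.of_nonneg_of_le (fun n => EE_nonneg r n)
      (f := fun n => Real.exp (-Real.pi ^ 2 * r) ^ (n + 1)) ?_ ?_
    · intro n
      rw [EE, if_neg (not_le.2 hr), ← Real.exp_nat_mul]
      apply Real.exp_le_exp.2
      have hp : (0:ℝ) < Real.pi ^ 2 := by positivity
      have h1 : ((n:ℝ) + 1) ≤ ((n:ℝ) + 1) ^ 2 := by nlinarith [Nat.cast_nonneg (α := ℝ) n]
      unfold lam
      push_cast
      nlinarith [mul_le_mul_of_nonneg_right h1 (by positivity : (0:ℝ) ≤ Real.pi ^ 2 * r)]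
    · have hq1 : Real.exp (-Real.pi ^ 2 * r) < 1 := by
        apply Real.exp_lt_one_iff.2
        have h := Real.pi_pos
        have : (0:ℝ) < Real.pi ^ 2 := by positivity
        nlinarith
      have hg := summable_geometric_of_lt_one (Real.exp_nonneg _) hq1
      have := hg.mul_right (Real.exp (-Real.pi ^ 2 * r))
      simpa [pow_succ] using this

lemma int_exp_eq (c a b : ℝ) (hc : c ≠ 0) :
    ∫ τ in a..b, Real.exp (c * τ) = (Real.exp (c * b) - Real.exp (c * a)) / c := by
  rw [intervalIntegral.integral_comp_mul_left (fun x => Real.exp x) hc, integral_exp]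
  rw [smul_eq_mul]; ring

lemma int_cos_eq (c a b : ℝ) (hc : c ≠ 0) :
    ∫ τ in a..b, Real.cos (c * τ) = (Real.sin (c * b) - Real.sin (c * a)) / c := by
  rw [intervalIntegral.integral_comp_mul_left (fun x => Real.cos x) hc, integral_cos]
  rw [smul_eq_mul]; ring

lemma es_mul_es (m n : ℕ) (η : ℝ) :
    es m η * es n η =
      Real.cos ((((m:ℝ) - n) * Real.pi) * η) - Real.cos ((((m:ℝ) + n + 2) * Real.pi) * η) := by
  have h2 : Real.sqrt 2 * Real.sqrt 2 = 2 := Real.mul_self_sqrt (by norm_num)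
  unfold es
  rw [Real.cos_sub_cos]
  have e1 : ((((m:ℝ) - n) * Real.pi) * η + (((m:ℝ) + n + 2) * Real.pi) * η) / 2
      = ((m:ℝ) + 1) * Real.pi * η := by ring
  have e2 : ((((m:ℝ) - n) * Real.pi) * η - (((m:ℝ) + n + 2) * Real.pi) * η) / 2
      = -(((n:ℝ) + 1) * Real.pi * η) := by ring
  rw [e1, e2, Real.sin_neg]
  linear_combination Real.sin (((m:ℝ) + 1) * Real.pi * η) * Real.sin (((n:ℝ) + 1) * Real.pi * η) * h2

lemma sin_coe_mul_pi (k : ℤ) : Real.sin ((k : ℝ) * Real.pi) = 0 := Real.sin_int_mul_pi k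

lemma orth (m n : ℕ) :
    ∫ η in Set.Ioc (0:ℝ) 1, es m η * es n η = if m = n then 1 else 0 := by
  rw [← intervalIntegral.integral_of_le (by norm_num : (0:ℝ) ≤ 1)]
  have hcont1 : IntervalIntegrable (fun η => Real.cos ((((m:ℝ) - n) * Real.pi) * η))
      volume 0 1 := (Continuous.intervalIntegrable (by continuity) _ _)
  have hcont2 : IntervalIntegrable (fun η => Real.cos ((((m:ℝ) + n + 2) * Real.pi) * η))
      volume 0 1 := (Continuous.intervalIntegrable (by continuity) _ _)
  calc (∫ η in (0:ℝ)..1, es m η * es n η)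
      = ∫ η in (0:ℝ)..1, (Real.cos ((((m:ℝ) - n) * Real.pi) * η)
          - Real.cos ((((m:ℝ) + n + 2) * Real.pi) * η)) := by
        apply intervalIntegral.integral_congr
        intro η _; exact es_mul_es m n η
    _ = (∫ η in (0:ℝ)..1, Real.cos ((((m:ℝ) - n) * Real.pi) * η))
        - ∫ η in (0:ℝ)..1, Real.cos ((((m:ℝ) + n + 2) * Real.pi) * η) :=
        intervalIntegral.integral_sub hcont1 hcont2
    _ = if m = n then 1 else 0 := by
        have hpi := Real.pi_ne_zero
        have hc2 : ((m:ℝ) + n + 2) * Real.pi ≠ 0 := by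
          apply mul_ne_zero _ hpi
          positivity
        have hint2 : (∫ η in (0:ℝ)..1, Real.cos ((((m:ℝ) + n + 2) * Real.pi) * η)) = 0 := by
          rw [int_cos_eq _ _ _ hc2]
          have : (((m:ℝ) + n + 2) * Real.pi) * 1 = ((m + n + 2 : ℤ) : ℝ) * Real.pi := by
            push_cast; ring
          rw [this, sin_coe_mul_pi]
          simp
        rw [hint2]
        by_cases hmn : m = n
        · subst hmn
          simp only [if_pos rfl]
          have : ((m:ℝ) - m) * Real.pi = 0 := by ring
          rw [this]
          simp
        · have hc1 : ((m:ℝ) - n) * Real.pi ≠ 0 := by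
            apply mul_ne_zero _ hpi
            intro h
            apply hmn
            have : (m:ℝ) = n := by linarith [sub_eq_zero.1 h]
            exact_mod_cast this
          rw [int_cos_eq _ _ _ hc1]
          have : (((m:ℝ) - n) * Real.pi) * 1 = (((m:ℤ) - n : ℤ) : ℝ) * Real.pi := by
            push_cast; ring
          rw [this, sin_coe_mul_pi]
          simp [hmn]

lemma es_continuous (n : ℕ) : Continuous (fun η => es n η) := by
  unfold es; continuity

set_option maxHeartbeats 1000000 in
lemma parseval (b : ℕ → ℝ) (hb : Summable (fun n => |b n|)) :
    ∫ η in Set.Ioc (0:ℝ) 1, (∑' n, b n * es n η) ^ 2 = ∑' n, (b n) ^ 2 := by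
  have hs2 : (0:ℝ) ≤ Real.sqrt 2 := Real.sqrt_nonneg 2
  have hnorm : ∀ η, Summable (fun n => ‖b n * es n η‖) := by
    intro η
    refine Summable.of_nonneg_of_le (fun n => norm_nonneg _)
      (f := fun n => Real.sqrt 2 * |b n|) ?_ (hb.mul_left _)
    intro n
    rw [Real.norm_eq_abs, abs_mul]
    calc |b n| * |es n η| ≤ |b n| * Real.sqrt 2 :=
          mul_le_mul_of_nonneg_left (abs_es_le n η) (abs_nonneg _)
      _ = Real.sqrt 2 * |b n| := mul_comm _ _
  have hprod : ∀ η, (∑' n, b n * es n η) ^ 2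
      = ∑' p : ℕ × ℕ, (b p.1 * es p.1 η) * (b p.2 * es p.2 η) := by
    intro η
    rw [sq]
    exact tsum_mul_tsum_of_summable_norm (hnorm η) (hnorm η)
  have hbn : Summable (fun n => ‖|b n|‖) := by
    simpa [Real.norm_eq_abs, abs_abs] using hb
  have habs : Summable (fun p : ℕ × ℕ => |b p.1| * |b p.2|) :=
    summable_mul_of_summable_norm hbn hbn
  have hFbound : ∀ (p : ℕ × ℕ) (η : ℝ),
      ‖(b p.1 * es p.1 η) * (b p.2 * es p.2 η)‖ ≤ 2 * (|b p.1| * |b p.2|) := by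
    intro p η
    rw [norm_mul, Real.norm_eq_abs, Real.norm_eq_abs, abs_mul, abs_mul]
    have h1 := abs_es_le p.1 η
    have h2 := abs_es_le p.2 η
    have hsq : Real.sqrt 2 * Real.sqrt 2 = 2 := Real.mul_self_sqrt (by norm_num)
    have hee : |es p.1 η| * |es p.2 η| ≤ 2 := by
      calc |es p.1 η| * |es p.2 η| ≤ Real.sqrt 2 * Real.sqrt 2 :=
            mul_le_mul h1 h2 (abs_nonneg _) hs2
        _ = 2 := hsq
    calc |b p.1| * |es p.1 η| * (|b p.2| * |es p.2 η|)
        = (|b p.1| * |b p.2|) * (|es p.1 η| * |es p.2 η|) := by ring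
      _ ≤ (|b p.1| * |b p.2|) * 2 :=
          mul_le_mul_of_nonneg_left hee (by positivity)
      _ = 2 * (|b p.1| * |b p.2|) := by ring
  have hmeas : ∀ p : ℕ × ℕ, AEStronglyMeasurable
      (fun η => (b p.1 * es p.1 η) * (b p.2 * es p.2 η))
      (volume.restrict (Set.Ioc (0:ℝ) 1)) := by
    intro p
    exact ((continuous_const.mul (es_continuous p.1)).mul
      (continuous_const.mul (es_continuous p.2))).aestronglyMeasurable
  have hlint : ∑' p : ℕ × ℕ, ∫⁻ η in Set.Ioc (0:ℝ) 1,
      ‖(b p.1 * es p.1 η) * (b p.2 * es p.2 η)‖₊ ≠ ⊤ := by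
    have hb1 : ∀ p : ℕ × ℕ, (∫⁻ η in Set.Ioc (0:ℝ) 1,
        ‖(b p.1 * es p.1 η) * (b p.2 * es p.2 η)‖₊)
        ≤ ENNReal.ofReal (2 * (|b p.1| * |b p.2|)) := by
      intro p
      have : ∀ η, (‖(b p.1 * es p.1 η) * (b p.2 * es p.2 η)‖₊ : ENNReal)
          ≤ ENNReal.ofReal (2 * (|b p.1| * |b p.2|)) := by
        intro η
        rw [← enorm_eq_nnnorm, ← ofReal_norm_eq_enorm]
        exact ENNReal.ofReal_le_ofReal (hFbound p η)
      calc (∫⁻ η in Set.Ioc (0:ℝ) 1, ‖(b p.1 * es p.1 η) * (b p.2 * es p.2 η)‖₊)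
          ≤ ∫⁻ _ in Set.Ioc (0:ℝ) 1, ENNReal.ofReal (2 * (|b p.1| * |b p.2|)) :=
            lintegral_mono (fun η => this η)
        _ = ENNReal.ofReal (2 * (|b p.1| * |b p.2|)) * volume (Set.Ioc (0:ℝ) 1) :=
            setLIntegral_const _ _
        _ ≤ ENNReal.ofReal (2 * (|b p.1| * |b p.2|)) := by
            rw [Real.volume_Ioc]
            simp
    refine ne_top_of_le_ne_top ?_ (ENNReal.tsum_le_tsum hb1)
    rw [← ENNReal.ofReal_tsum_of_nonneg (fun p => by positivity) (habs.mul_left 2)]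
    exact ENNReal.ofReal_ne_top
  calc ∫ η in Set.Ioc (0:ℝ) 1, (∑' n, b n * es n η) ^ 2
      = ∫ η in Set.Ioc (0:ℝ) 1,
          ∑' p : ℕ × ℕ, (b p.1 * es p.1 η) * (b p.2 * es p.2 η) := by
        exact integral_congr_ae (Filter.Eventually.of_forall fun η => hprod η)
    _ = ∑' p : ℕ × ℕ, ∫ η in Set.Ioc (0:ℝ) 1,
          (b p.1 * es p.1 η) * (b p.2 * es p.2 η) :=
        integral_tsum hmeas hlint
    _ = ∑' p : ℕ × ℕ, (b p.1 * b p.2) * (if p.1 = p.2 then (1:ℝ) else 0) := by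
        apply tsum_congr
        intro p
        have : (fun η => (b p.1 * es p.1 η) * (b p.2 * es p.2 η))
            = fun η => (b p.1 * b p.2) * (es p.1 η * es p.2 η) := by
          funext η; ring
        rw [this, integral_const_mul, orth]
    _ = ∑' n : ℕ, (b n) ^ 2 := by
        have hinj : Function.Injective (fun n : ℕ => ((n, n) : ℕ × ℕ)) := by
          intro a b h
          simpa using congrArg Prod.fst h
        have hsupp : Function.support
            (fun p : ℕ × ℕ => (b p.1 * b p.2) * (if p.1 = p.2 then (1:ℝ) else 0))
            ⊆ Set.range (fun n : ℕ => ((n, n) : ℕ × ℕ)) := by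
          intro p hp
          by_cases h : p.1 = p.2
          · exact ⟨p.1, by rw [Prod.ext_iff]; exact ⟨rfl, h⟩⟩
          · simp [Function.mem_support, if_neg h] at hp
        rw [← Function.Injective.tsum_eq hinj hsupp]
        apply tsum_congr
        intro n
        simp [sq]

lemma heatKernel_repr (r x η : ℝ) :
    heatKernel r x η = ∑' n, (EE r n * es n x) * es n η := by
  unfold heatKernel EE es
  by_cases hr : r ≤ 0
  · simp [hr]
  · rw [if_neg hr]
    apply tsum_congr; intro n
    simp only [if_neg hr]
    have hsq : Real.sqrt 2 ^ 2 = 2 := Real.sq_sqrt (by norm_num)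
    have he : -((n : ℝ) + 1) ^ 2 * Real.pi ^ 2 * r = -lam n * r := by unfold lam; ring
    rw [he]
    linear_combination (-(Real.exp (-lam n * r) * Real.sin (((n : ℝ) + 1) * Real.pi * x) *
      Real.sin (((n : ℝ) + 1) * Real.pi * η))) * hsq

lemma summable_coef_es (r x η : ℝ) : Summable (fun n => (EE r n * es n x) * es n η) := by
  apply Summable.of_norm_bounded ((summable_EE r).mul_left 2)
  intro n
  rw [Real.norm_eq_abs, abs_mul, abs_mul, abs_of_nonneg (EE_nonneg r n)]
  have h1 := abs_es_le n x
  have h2 := abs_es_le n η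
  have hE := EE_nonneg r n
  have hsq : Real.sqrt 2 * Real.sqrt 2 = 2 := Real.mul_self_sqrt (by norm_num)
  have hs2 := Real.sqrt_nonneg 2
  nlinarith [abs_nonneg (es n x), abs_nonneg (es n η),
    mul_le_mul h1 h2 (abs_nonneg (es n η)) hs2]

lemma diff_repr (t s x y τ η : ℝ) :
    heatKernel (t - τ) x η - heatKernel (s - τ) y η
      = ∑' n, (EE (t - τ) n * es n x - EE (s - τ) n * es n y) * es n η := by
  rw [heatKernel_repr, heatKernel_repr,
    ← Summable.tsum_sub (summable_coef_es (t - τ) x η) (summable_coef_es (s - τ) y η)]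
  apply tsum_congr; intro n; ring

lemma summable_abs_coef (t s x y τ : ℝ) :
    Summable (fun n => |EE (t - τ) n * es n x - EE (s - τ) n * es n y|) := by
  refine Summable.of_nonneg_of_le (fun n => abs_nonneg _)
    (f := fun n => Real.sqrt 2 * EE (t - τ) n + Real.sqrt 2 * EE (s - τ) n) ?_
    (((summable_EE _).mul_left _).add ((summable_EE _).mul_left _))
  intro n
  have h1 := abs_es_le n x
  have h2 := abs_es_le n y
  have hE1 := EE_nonneg (t - τ) n
  have hE2 := EE_nonneg (s - τ) n
  calc |EE (t - τ) n * es n x - EE (s - τ) n * es n y|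
      ≤ |EE (t - τ) n * es n x| + |EE (s - τ) n * es n y| := abs_sub _ _
    _ ≤ Real.sqrt 2 * EE (t - τ) n + Real.sqrt 2 * EE (s - τ) n := by
        rw [abs_mul, abs_mul, abs_of_nonneg hE1, abs_of_nonneg hE2]
        have := mul_le_mul_of_nonneg_left h1 hE1
        have := mul_le_mul_of_nonneg_left h2 hE2
        nlinarith

lemma one_sub_exp_le_one (z : ℝ) : 1 - Real.exp (-z) ≤ 1 := by
  have := Real.exp_nonneg (-z); linarith

lemma one_sub_exp_le (z : ℝ) : 1 - Real.exp (-z) ≤ z := by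
  have := Real.add_one_le_exp (-z); linarith

lemma int_exp_window (l a b : ℝ) (hl : 0 < l) (hab : a ≤ b) :
    ∫ τ in Set.Ioc a b, Real.exp (-2 * l * (b - τ))
      = (1 - Real.exp (-2 * l * (b - a))) / (2 * l) := by
  rw [← intervalIntegral.integral_of_le hab]
  have h1 : ∀ τ : ℝ, Real.exp (-2 * l * (b - τ))
      = Real.exp (-2 * l * b) * Real.exp ((2 * l) * τ) := by
    intro τ; rw [← Real.exp_add]; ring_nf
  simp_rw [h1]
  rw [intervalIntegral.integral_const_mul, int_exp_eq _ _ _ (by positivity : (2 * l) ≠ 0)]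
  have h2 : Real.exp (-2 * l * b) * Real.exp (2 * l * b) = 1 := by
    rw [← Real.exp_add]; norm_num
  have h3 : Real.exp (-2 * l * b) * Real.exp (2 * l * a) = Real.exp (-2 * l * (b - a)) := by
    rw [← Real.exp_add]; ring_nf
  linear_combination (1 / (2 * l)) * h2

lemma int_exp_window_le (l a b : ℝ) (hl : 0 < l) (hab : a ≤ b) :
    ∫ τ in Set.Ioc a b, Real.exp (-2 * l * (b - τ)) ≤ 1 / (2 * l) := by
  rw [int_exp_window l a b hl hab]
  have h : (1 - Real.exp (-2 * l * (b - a))) ≤ 1 := by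
    have := Real.exp_nonneg (-2 * l * (b - a)); linarith
  exact (div_le_div_iff_of_pos_right (by positivity)).2 h

lemma exp_integrableOn (l c a b : ℝ) :
    IntegrableOn (fun τ => Real.exp (-2 * l * (c - τ))) (Set.Ioc a b) volume := by
  apply Continuous.integrableOn_Ioc
  continuity

lemma measurable_EE (c : ℝ) (n : ℕ) : Measurable fun τ : ℝ => EE (c - τ) n := by
  unfold EE
  apply Measurable.ite
  · exact measurableSet_le (measurable_const.sub measurable_id) measurable_const
  · exact measurable_const
  · exact (((measurable_const.sub measurable_id).const_mul (-lam n)).exp)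

set_option maxHeartbeats 1000000 in
lemma key_bound {T s t : ℝ} (x y : ℝ) (hs : 0 < s) (hst : s < t) (htT : t < T) (n : ℕ) :
    ∫ τ in Set.Ioc (0:ℝ) T, (EE (t - τ) n * es n x - EE (s - τ) n * es n y) ^ 2
      ≤ (4 * min 1 (lam n * (t - s)) + (es n x - es n y) ^ 2) / lam n := by
  have hl := lam_pos n
  set l := lam n with hldef
  set u := es n x with hu
  set v := es n y with hv
  set m := min 1 (l * (t - s)) with hm
  have hm0 : 0 ≤ m := le_min (by norm_num) (by nlinarith)
  have hm1 : m ≤ 1 := min_le_left _ _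
  set f : ℝ → ℝ := fun τ => EE (t - τ) n * u - EE (s - τ) n * v with hf
  have hmf : Measurable f :=
    ((measurable_EE t n).mul_const u).sub ((measurable_EE s n).mul_const v)
  have hfb : ∀ τ, f τ ^ 2 ≤ 8 := by
    intro τ
    have h1 : |EE (t - τ) n * u| ≤ Real.sqrt 2 := by
      rw [abs_mul, abs_of_nonneg (EE_nonneg _ _)]
      calc EE (t - τ) n * |u| ≤ 1 * Real.sqrt 2 :=
        mul_le_mul (EE_le_one _ _) (abs_es_le n x) (abs_nonneg _) (by norm_num)
      _ = Real.sqrt 2 := one_mul _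
    have h2 : |EE (s - τ) n * v| ≤ Real.sqrt 2 := by
      rw [abs_mul, abs_of_nonneg (EE_nonneg _ _)]
      calc EE (s - τ) n * |v| ≤ 1 * Real.sqrt 2 :=
        mul_le_mul (EE_le_one _ _) (abs_es_le n y) (abs_nonneg _) (by norm_num)
      _ = Real.sqrt 2 := one_mul _
    have hsq : Real.sqrt 2 ^ 2 = 2 := Real.sq_sqrt (by norm_num)
    have habs : |f τ| ≤ 2 * Real.sqrt 2 := by
      calc |f τ| ≤ |EE (t - τ) n * u| + |EE (s - τ) n * v| := abs_sub _ _
        _ ≤ 2 * Real.sqrt 2 := by linarith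
    calc f τ ^ 2 = |f τ| ^ 2 := (sq_abs _).symm
      _ ≤ (2 * Real.sqrt 2) ^ 2 := by nlinarith [abs_nonneg (f τ)]
      _ = 8 := by nlinarith
  have hint : ∀ a b : ℝ, IntegrableOn (fun τ => f τ ^ 2) (Set.Ioc a b) volume := by
    intro a b
    have hc : IntegrableOn (fun _ : ℝ => (8:ℝ)) (Set.Ioc a b) volume :=
      integrableOn_const (hs := measure_Ioc_lt_top.ne)
    apply Integrable.mono' hc ((hmf.pow_const 2).aestronglyMeasurable)
    filter_upwards with τ
    rw [Real.norm_eq_abs, abs_of_nonneg (sq_nonneg _)]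
    exact hfb τ
  -- splitting
  have e1 : ∫ τ in Set.Ioc (0:ℝ) t, f τ ^ 2
      = (∫ τ in Set.Ioc (0:ℝ) s, f τ ^ 2) + ∫ τ in Set.Ioc s t, f τ ^ 2 := by
    rw [← Set.Ioc_union_Ioc_eq_Ioc hs.le hst.le]
    exact setIntegral_union (Set.Ioc_disjoint_Ioc_of_le le_rfl) measurableSet_Ioc (hint 0 s) (hint s t)
  have e2 : ∫ τ in Set.Ioc (0:ℝ) T, f τ ^ 2
      = (∫ τ in Set.Ioc (0:ℝ) t, f τ ^ 2) + ∫ τ in Set.Ioc t T, f τ ^ 2 := by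
    rw [← Set.Ioc_union_Ioc_eq_Ioc (by linarith : (0:ℝ) ≤ t) (by linarith : t ≤ T)]
    exact setIntegral_union (Set.Ioc_disjoint_Ioc_of_le le_rfl) measurableSet_Ioc (hint 0 t) (hint t T)
  -- piece 3
  have h3 : ∫ τ in Set.Ioc t T, f τ ^ 2 = 0 := by
    have hEq : Set.EqOn (fun τ => f τ ^ 2) (fun _ => (0:ℝ)) (Set.Ioc t T) := by
      intro τ hτ
      have h1 : t ≤ τ := hτ.1.le
      have h2 : s ≤ τ := by linarith [hτ.1]
      simp [hf, EE, sub_nonpos, h1, h2]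
    rw [setIntegral_congr_fun measurableSet_Ioc hEq]
    simp
  -- piece 2
  have h2b : (∫ τ in Set.Ioc s t, f τ ^ 2) ≤ 2 * m / l := by
    have hb : ∀ τ ∈ Set.Ioc s t, f τ ^ 2 ≤ 2 * Real.exp (-2 * l * (t - τ)) := by
      intro τ hτ
      have hsτ : s - τ ≤ 0 := by linarith [hτ.1]
      have hEs : EE (s - τ) n = 0 := if_pos hsτ
      have hE2 : EE (t - τ) n ^ 2 ≤ Real.exp (-2 * l * (t - τ)) := by
        by_cases h : t - τ ≤ 0
        · simp only [EE, if_pos h]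
          simpa using Real.exp_nonneg (-2 * l * (t - τ))
        · simp only [EE, if_neg h]
          rw [sq, ← Real.exp_add]
          apply le_of_eq; congr 1; ring
      have : f τ = EE (t - τ) n * u := by rw [hf]; simp [hEs]
      rw [this]
      calc (EE (t - τ) n * u) ^ 2 = EE (t - τ) n ^ 2 * u ^ 2 := by ring
        _ ≤ Real.exp (-2 * l * (t - τ)) * 2 :=
            mul_le_mul hE2 (es_sq_le n x) (sq_nonneg _) (Real.exp_nonneg _)
        _ = 2 * Real.exp (-2 * l * (t - τ)) := mul_comm _ _
    have hmono := setIntegral_mono_on (hint s t)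
      ((exp_integrableOn l t s t).const_mul 2) measurableSet_Ioc hb
    have hwin : ∫ τ in Set.Ioc s t, (2:ℝ) * Real.exp (-2 * l * (t - τ))
        = 2 * ((1 - Real.exp (-2 * l * (t - s))) / (2 * l)) := by
      rw [integral_const_mul, int_exp_window l s t hl hst.le]
    have hz1 : 1 - Real.exp (-2 * l * (t - s)) ≤ 1 := by
      have := Real.exp_nonneg (-2 * l * (t - s)); linarith
    have hz2 : 1 - Real.exp (-2 * l * (t - s)) ≤ 2 * l * (t - s) := by
      have h := one_sub_exp_le (2 * l * (t - s))
      have : -(2 * l * (t - s)) = -2 * l * (t - s) := by ring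
      rw [this] at h; exact h
    have hfinal : 2 * ((1 - Real.exp (-2 * l * (t - s))) / (2 * l)) ≤ 2 * m / l := by
      have heq2 : 2 * ((1 - Real.exp (-2 * l * (t - s))) / (2 * l))
          = (1 - Real.exp (-2 * l * (t - s))) / l := by
        field_simp
      rw [heq2]
      have h2m : 1 - Real.exp (-2 * l * (t - s)) ≤ 2 * m := by
        rcases le_total (l * (t - s)) 1 with hc | hc
        · have hmm : m = l * (t - s) := min_eq_right hc
          rw [hmm]; linarith
        · have hmm : m = 1 := min_eq_left hc
          rw [hmm]; linarith
      exact (div_le_div_iff_of_pos_right hl).2 h2m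
    calc (∫ τ in Set.Ioc s t, f τ ^ 2)
        ≤ ∫ τ in Set.Ioc s t, (2:ℝ) * Real.exp (-2 * l * (t - τ)) := hmono
      _ = 2 * ((1 - Real.exp (-2 * l * (t - s))) / (2 * l)) := hwin
      _ ≤ 2 * m / l := hfinal
  -- piece 1
  have h1b : (∫ τ in Set.Ioc (0:ℝ) s, f τ ^ 2)
      ≤ (4 * m ^ 2 + 2 * (u - v) ^ 2) / (2 * l) := by
    rw [integral_Ioc_eq_integral_Ioo]
    set C := (Real.exp (-l * (t - s)) * u - v) ^ 2 with hC
    have heq : Set.EqOn (fun τ => f τ ^ 2)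
        (fun τ => C * Real.exp (-2 * l * (s - τ))) (Set.Ioo 0 s) := by
      intro τ hτ
      have h1 : ¬ (t - τ ≤ 0) := by push_neg; linarith [hτ.2]
      have h2 : ¬ (s - τ ≤ 0) := by push_neg; linarith [hτ.2]
      simp only [hf, EE, if_neg h1, if_neg h2]
      have e3 : Real.exp (-lam n * (t - τ))
          = Real.exp (-l * (t - s)) * Real.exp (-lam n * (s - τ)) := by
        rw [← Real.exp_add]; congr 1; rw [hldef]; ring
      have e4 : Real.exp (-2 * l * (s - τ)) = Real.exp (-lam n * (s - τ)) ^ 2 := by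
        rw [sq, ← Real.exp_add]; congr 1; rw [hldef]; ring
      rw [e3, hC, e4]
      ring
    rw [setIntegral_congr_fun measurableSet_Ioo heq, integral_const_mul]
    have hCnn : 0 ≤ C := sq_nonneg _
    have hint1 : (∫ τ in Set.Ioo (0:ℝ) s, Real.exp (-2 * l * (s - τ))) ≤ 1 / (2 * l) := by
      rw [← integral_Ioc_eq_integral_Ioo]
      exact int_exp_window_le l 0 s hl hs.le
    have hint0 : 0 ≤ ∫ τ in Set.Ioo (0:ℝ) s, Real.exp (-2 * l * (s - τ)) :=
      setIntegral_nonneg measurableSet_Ioo (fun τ _ => Real.exp_nonneg _)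
    have hCb : C ≤ 4 * m ^ 2 + 2 * (u - v) ^ 2 := by
      set E := Real.exp (-l * (t - s)) with hE
      have hE0 : 0 < E := Real.exp_pos _
      have hme : 1 - E ≤ m := by
        apply le_min
        · linarith
        · have h := one_sub_exp_le (l * (t - s))
          have : -(l * (t - s)) = -l * (t - s) := by ring
          rw [this] at h; exact h
      have hE1 : E ≤ 1 := by
        rw [hE]
        calc Real.exp (-l * (t - s)) ≤ Real.exp 0 := Real.exp_le_exp.2 (by nlinarith)
          _ = 1 := Real.exp_zero
      have ha : 0 ≤ 1 - E := by linarith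
      have ha2 : (1 - E) ^ 2 ≤ m ^ 2 := by nlinarith
      have hu2 : u ^ 2 ≤ 2 := es_sq_le n x
      have h5 : (1 - E) ^ 2 * u ^ 2 ≤ (1 - E) ^ 2 * 2 :=
        mul_le_mul_of_nonneg_left hu2 (sq_nonneg _)
      rw [hC]
      nlinarith [sq_nonneg ((u - v) - (1 - E) * u), sq_nonneg ((u - v) + (1 - E) * u)]
    calc C * ∫ τ in Set.Ioo (0:ℝ) s, Real.exp (-2 * l * (s - τ))
        ≤ (4 * m ^ 2 + 2 * (u - v) ^ 2) * (1 / (2 * l)) := by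
          apply mul_le_mul hCb hint1 hint0 (by positivity)
      _ = (4 * m ^ 2 + 2 * (u - v) ^ 2) / (2 * l) := by ring
  -- combine
  have hw : 0 ≤ (u - v) ^ 2 := sq_nonneg _
  have hcomb : (4 * m ^ 2 + 2 * (u - v) ^ 2) / (2 * l) + 2 * m / l
      ≤ (4 * m + (u - v) ^ 2) / l := by
    rw [div_add_div _ _ (by positivity : (2*l) ≠ 0) (ne_of_gt hl),
      div_le_div_iff₀ (by positivity) hl]
    nlinarith [mul_nonneg (mul_nonneg hm0 (by linarith : (0:ℝ) ≤ 1 - m)) (mul_pos hl hl).le]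
  calc ∫ τ in Set.Ioc (0:ℝ) T, (EE (t - τ) n * u - EE (s - τ) n * v) ^ 2
      = ∫ τ in Set.Ioc (0:ℝ) T, f τ ^ 2 := rfl
    _ = (∫ τ in Set.Ioc (0:ℝ) s, f τ ^ 2) + (∫ τ in Set.Ioc s t, f τ ^ 2) := by
        rw [e2, e1, h3]; ring
    _ ≤ (4 * m ^ 2 + 2 * (u - v) ^ 2) / (2 * l) + 2 * m / l := add_le_add h1b h2b
    _ ≤ (4 * m + (u - v) ^ 2) / l := hcomb

lemma es_diff_sq_le (n : ℕ) (x y : ℝ) :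
    (es n x - es n y) ^ 2 ≤ 8 * min 1 (lam n * (x - y) ^ 2) := by
  set a := ((n:ℝ) + 1) * Real.pi * x with ha
  set b := ((n:ℝ) + 1) * Real.pi * y with hb
  have h1 : |Real.sin a - Real.sin b| ≤ 2 := by
    calc |Real.sin a - Real.sin b| ≤ |Real.sin a| + |Real.sin b| := abs_sub _ _
      _ ≤ 2 := by linarith [Real.abs_sin_le_one a, Real.abs_sin_le_one b]
  have h2 : |Real.sin a - Real.sin b| ≤ |a - b| := by
    rw [Real.sin_sub_sin, abs_mul, abs_mul]
    have hs := Real.abs_sin_le_abs (x := (a - b) / 2)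
    have hc := Real.abs_cos_le_one ((a + b) / 2)
    have habs : |(a - b) / 2| = |a - b| / 2 := by rw [abs_div]; norm_num
    rw [habs] at hs
    have h2' : |(2:ℝ)| = 2 := by norm_num
    rw [h2']
    nlinarith [abs_nonneg (Real.sin ((a - b) / 2)), abs_nonneg (a - b),
      abs_nonneg (Real.cos ((a + b) / 2))]
  have hd2 : (Real.sin a - Real.sin b) ^ 2 ≤ min 4 ((a - b) ^ 2) := by
    apply le_min
    · nlinarith [sq_abs (Real.sin a - Real.sin b), abs_nonneg (Real.sin a - Real.sin b)]
    · nlinarith [sq_abs (Real.sin a - Real.sin b), sq_abs (a - b),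
        abs_nonneg (Real.sin a - Real.sin b), abs_nonneg (a - b)]
  have hab2 : (a - b) ^ 2 = lam n * (x - y) ^ 2 := by
    rw [ha, hb]; unfold lam; ring
  have hmin4 : min 4 (lam n * (x - y) ^ 2) ≤ 4 * min 1 (lam n * (x - y) ^ 2) := by
    have hz : 0 ≤ lam n * (x - y) ^ 2 := mul_nonneg (lam_pos n).le (sq_nonneg _)
    rcases le_total (lam n * (x - y) ^ 2) 1 with hc | hc
    · rw [min_eq_right hc]
      calc min 4 (lam n * (x - y) ^ 2) ≤ lam n * (x - y) ^ 2 := min_le_right _ _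
        _ ≤ 4 * (lam n * (x - y) ^ 2) := by linarith
    · rw [min_eq_left hc]
      calc min 4 (lam n * (x - y) ^ 2) ≤ 4 := min_le_left _ _
        _ = 4 * 1 := by norm_num
  have hes : (es n x - es n y) ^ 2 = 2 * (Real.sin a - Real.sin b) ^ 2 := by
    unfold es
    rw [← ha, ← hb]
    have hsq : Real.sqrt 2 ^ 2 = 2 := Real.sq_sqrt (by norm_num)
    linear_combination (Real.sin a - Real.sin b) ^ 2 * hsq
  rw [hes]
  rw [hab2] at hd2
  linarith [hd2.trans hmin4, min_le_left 4 (lam n * (x - y) ^ 2)]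

lemma min_le_rpow (z β : ℝ) (hz : 0 ≤ z) (hβ0 : 0 < β) (hβ1 : β ≤ 1) :
    min 1 z ≤ z ^ β := by
  rcases eq_or_lt_of_le hz with h0 | h0
  · rw [← h0, Real.zero_rpow (ne_of_gt hβ0)]
    simp
  · rcases le_total z 1 with hz1 | hz1
    · rw [min_eq_right hz1]
      calc z = z ^ (1:ℝ) := (Real.rpow_one z).symm
        _ ≤ z ^ β := Real.rpow_le_rpow_of_exponent_ge h0 hz1 hβ1
    · rw [min_eq_left (by linarith)]
      calc (1:ℝ) = 1 ^ β := (Real.one_rpow β).symm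
        _ ≤ z ^ β := Real.rpow_le_rpow (by norm_num) hz1 hβ0.le

lemma summable_lam_rpow {β : ℝ} (hβ : β < 1/2) : Summable (fun n => lam n ^ (β - 1)) := by
  have h1 : ∀ n : ℕ, lam n ^ (β - 1) = ((n:ℝ) + 1) ^ (2 * (β - 1)) * (Real.pi ^ 2) ^ (β - 1) := by
    intro n
    unfold lam
    rw [Real.mul_rpow (by positivity) (by positivity)]
    congr 1
    have hn : (0:ℝ) ≤ (n:ℝ) + 1 := by positivity
    rw [← Real.rpow_natCast ((n:ℝ) + 1) 2, ← Real.rpow_mul hn]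
    norm_num [mul_comm]
  have h3 : Summable (fun n : ℕ => ((n:ℝ)) ^ (2 * (β - 1))) :=
    Real.summable_nat_rpow.2 (by linarith)
  have h4 := (summable_nat_add_iff 1).2 h3
  have h2 : Summable (fun n : ℕ => ((n:ℝ) + 1) ^ (2 * (β - 1))) := by
    apply h4.congr
    intro n
    push_cast
    rfl
  exact Summable.congr (h2.mul_right _) (fun n => (h1 n).symm)

lemma F_sq_measurable (t s x y : ℝ) (n : ℕ) :
    Measurable (fun τ => (EE (t - τ) n * es n x - EE (s - τ) n * es n y) ^ 2) :=
  (((measurable_EE t n).mul_const _).sub ((measurable_EE s n).mul_const _)).pow_const 2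

lemma F_sq_integrableOn (t s x y a b : ℝ) (n : ℕ) :
    IntegrableOn (fun τ => (EE (t - τ) n * es n x - EE (s - τ) n * es n y) ^ 2)
      (Set.Ioc a b) volume := by
  have hc : IntegrableOn (fun _ : ℝ => (8:ℝ)) (Set.Ioc a b) volume :=
    integrableOn_const (hs := measure_Ioc_lt_top.ne)
  apply Integrable.mono' hc (F_sq_measurable t s x y n).aestronglyMeasurable
  filter_upwards with τ
  rw [Real.norm_eq_abs, abs_of_nonneg (sq_nonneg _)]
  have h1 : |EE (t - τ) n * es n x| ≤ Real.sqrt 2 := by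
    rw [abs_mul, abs_of_nonneg (EE_nonneg _ _)]
    calc EE (t - τ) n * |es n x| ≤ 1 * Real.sqrt 2 :=
      mul_le_mul (EE_le_one _ _) (abs_es_le n x) (abs_nonneg _) (by norm_num)
    _ = Real.sqrt 2 := one_mul _
  have h2 : |EE (s - τ) n * es n y| ≤ Real.sqrt 2 := by
    rw [abs_mul, abs_of_nonneg (EE_nonneg _ _)]
    calc EE (s - τ) n * |es n y| ≤ 1 * Real.sqrt 2 :=
      mul_le_mul (EE_le_one _ _) (abs_es_le n y) (abs_nonneg _) (by norm_num)
    _ = Real.sqrt 2 := one_mul _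
  have hsq : Real.sqrt 2 ^ 2 = 2 := Real.sq_sqrt (by norm_num)
  have habs : |EE (t - τ) n * es n x - EE (s - τ) n * es n y| ≤ 2 * Real.sqrt 2 := by
    calc |EE (t - τ) n * es n x - EE (s - τ) n * es n y|
        ≤ |EE (t - τ) n * es n x| + |EE (s - τ) n * es n y| := abs_sub _ _
      _ ≤ 2 * Real.sqrt 2 := by linarith
  calc (EE (t - τ) n * es n x - EE (s - τ) n * es n y) ^ 2
      = |EE (t - τ) n * es n x - EE (s - τ) n * es n y| ^ 2 := (sq_abs _).symm
    _ ≤ (2 * Real.sqrt 2) ^ 2 := by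
        nlinarith [abs_nonneg (EE (t - τ) n * es n x - EE (s - τ) n * es n y)]
    _ = 8 := by nlinarith

set_option maxHeartbeats 1000000 in
/-- `L²`-Hölder continuity in space-time of the Dirichlet heat kernel: there is
`ᾱ ∈ (0, 1/2)` such that for every `α < ᾱ` there is `K̄(α)` with
`∫₀ᵀ∫₀¹ |G_{t-τ}(x,η) - G_{s-τ}(y,η)|² dη dτ ≤ K̄(α) ρ((t,x),(s,y))^{2α}`,
`ρ` being the Euclidean distance on `[0,T]×[0,1]` (and `G_r = 0` for `r ≤ 0`). -/
theorem heatKernel_L2_holder (T : ℝ) (hT : 0 < T) :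
    ∃ αbar ∈ Set.Ioo (0 : ℝ) (1 / 2), ∀ α : ℝ, 0 < α → α < αbar →
      ∃ Kbar : ℝ, ∀ s t x y : ℝ, 0 < s → s < t → t < T →
        x ∈ Set.Icc (0 : ℝ) 1 → y ∈ Set.Icc (0 : ℝ) 1 →
        (∫ τ in Set.Ioc (0 : ℝ) T, ∫ η in Set.Ioc (0 : ℝ) 1,
            (heatKernel (t - τ) x η - heatKernel (s - τ) y η) ^ 2) ≤
          Kbar * Real.sqrt ((t - s) ^ 2 + (x - y) ^ 2) ^ (2 * α) := by
  refine ⟨1/4, ⟨by norm_num, by norm_num⟩, ?_⟩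
  intro α hα0 hα4
  set β := 2 * α with hβdef
  have hβ0 : 0 < β := by rw [hβdef]; linarith
  have hβh : β < 1/2 := by rw [hβdef]; linarith
  have hβ1 : β ≤ 1 := by linarith
  have hS : Summable (fun n => lam n ^ (β - 1)) := summable_lam_rpow hβh
  refine ⟨12 * ∑' n, lam n ^ (β - 1), ?_⟩
  intro s t x y hs hst htT hx hy
  set ρ := Real.sqrt ((t - s) ^ 2 + (x - y) ^ 2) with hρ
  have hts : 0 < t - s := by linarith
  have hρ0 : 0 < ρ := Real.sqrt_pos.2 (by nlinarith)
  have hρβ : 0 ≤ ρ ^ β := Real.rpow_nonneg (Real.sqrt_nonneg _) β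
  have hhρ : t - s ≤ ρ := by
    rw [hρ]
    calc t - s = Real.sqrt ((t - s) ^ 2) := (Real.sqrt_sq hts.le).symm
      _ ≤ _ := Real.sqrt_le_sqrt (by nlinarith)
  have hδρ : (x - y) ^ 2 ≤ ρ := by
    obtain ⟨hx0, hx1⟩ := hx
    obtain ⟨hy0, hy1⟩ := hy
    have hδ1 : |x - y| ≤ 1 := by rw [abs_le]; constructor <;> linarith
    have hsq : (x - y) ^ 2 ≤ |x - y| := by
      nlinarith [abs_nonneg (x - y), sq_abs (x - y)]
    calc (x - y) ^ 2 ≤ |x - y| := hsq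
      _ = Real.sqrt ((x - y) ^ 2) := (Real.sqrt_sq_eq_abs _).symm
      _ ≤ ρ := Real.sqrt_le_sqrt (by nlinarith)
  set M : ℕ → ℝ := fun n => (12 * ρ ^ β) * lam n ^ (β - 1) with hM
  have hMn : ∀ n, (4 * min 1 (lam n * (t - s)) + (es n x - es n y) ^ 2) / lam n ≤ M n := by
    intro n
    have hl := lam_pos n
    have hb1 : min 1 (lam n * (t - s)) ≤ lam n ^ β * ρ ^ β := by
      calc min 1 (lam n * (t - s)) ≤ (lam n * (t - s)) ^ β :=
            min_le_rpow _ _ (mul_nonneg hl.le hts.le) hβ0 hβ1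
        _ = lam n ^ β * (t - s) ^ β := Real.mul_rpow hl.le hts.le
        _ ≤ lam n ^ β * ρ ^ β :=
            mul_le_mul_of_nonneg_left (Real.rpow_le_rpow hts.le hhρ hβ0.le)
              (Real.rpow_nonneg hl.le β)
    have hb2 : min 1 (lam n * (x - y) ^ 2) ≤ lam n ^ β * ρ ^ β := by
      calc min 1 (lam n * (x - y) ^ 2) ≤ (lam n * (x - y) ^ 2) ^ β :=
            min_le_rpow _ _ (mul_nonneg hl.le (sq_nonneg _)) hβ0 hβ1
        _ = lam n ^ β * ((x - y) ^ 2) ^ β := Real.mul_rpow hl.le (sq_nonneg _)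
        _ ≤ lam n ^ β * ρ ^ β :=
            mul_le_mul_of_nonneg_left (Real.rpow_le_rpow (sq_nonneg _) hδρ hβ0.le)
              (Real.rpow_nonneg hl.le β)
    have hsin := es_diff_sq_le n x y
    have hstep : (4 * min 1 (lam n * (t - s)) + (es n x - es n y) ^ 2) / lam n
        ≤ (12 * (lam n ^ β * ρ ^ β)) / lam n := by
      apply (div_le_div_iff_of_pos_right hl).2
      nlinarith
    have hstep2 : (12 * (lam n ^ β * ρ ^ β)) / lam n = M n := by
      show 12 * (lam n ^ β * ρ ^ β) / lam n = (12 * ρ ^ β) * lam n ^ (β - 1)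
      rw [Real.rpow_sub_one (ne_of_gt hl)]
      field_simp
    exact hstep.trans_eq hstep2
  have hMsum : Summable M := hS.mul_left _
  have hMnn : ∀ n, 0 ≤ M n := by
    intro n
    have h1 : 0 ≤ lam n ^ (β - 1) := Real.rpow_nonneg (lam_pos n).le _
    have : (0:ℝ) ≤ 12 * ρ ^ β := by positivity
    rw [hM]
    exact mul_nonneg this h1
  have hkeyM : ∀ n, (∫ τ in Set.Ioc (0:ℝ) T,
      (EE (t - τ) n * es n x - EE (s - τ) n * es n y) ^ 2) ≤ M n :=
    fun n => (key_bound x y hs hst htT n).trans (hMn n)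
  have hFnn : ∀ n, 0 ≤ ∫ τ in Set.Ioc (0:ℝ) T,
      (EE (t - τ) n * es n x - EE (s - τ) n * es n y) ^ 2 :=
    fun n => setIntegral_nonneg measurableSet_Ioc (fun τ _ => sq_nonneg _)
  have hinner : ∀ τ : ℝ, (∫ η in Set.Ioc (0:ℝ) 1,
      (heatKernel (t - τ) x η - heatKernel (s - τ) y η) ^ 2)
      = ∑' n, (EE (t - τ) n * es n x - EE (s - τ) n * es n y) ^ 2 := by
    intro τ
    calc ∫ η in Set.Ioc (0:ℝ) 1, (heatKernel (t - τ) x η - heatKernel (s - τ) y η) ^ 2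
        = ∫ η in Set.Ioc (0:ℝ) 1,
            (∑' n, (EE (t - τ) n * es n x - EE (s - τ) n * es n y) * es n η) ^ 2 :=
          by simp only [diff_repr t s x y τ]
      _ = ∑' n, (EE (t - τ) n * es n x - EE (s - τ) n * es n y) ^ 2 :=
          parseval _ (summable_abs_coef t s x y τ)
  have hmeasF : ∀ n, AEStronglyMeasurable
      (fun τ => (EE (t - τ) n * es n x - EE (s - τ) n * es n y) ^ 2)
      (volume.restrict (Set.Ioc (0:ℝ) T)) :=
    fun n => (F_sq_measurable t s x y n).aestronglyMeasurable
  have hlt : ∑' n, ∫⁻ τ in Set.Ioc (0:ℝ) T,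
      ‖(EE (t - τ) n * es n x - EE (s - τ) n * es n y) ^ 2‖₊ ≠ ⊤ := by
    have heach : ∀ n, (∫⁻ τ in Set.Ioc (0:ℝ) T,
        ‖(EE (t - τ) n * es n x - EE (s - τ) n * es n y) ^ 2‖₊)
        = ENNReal.ofReal (∫ τ in Set.Ioc (0:ℝ) T,
            (EE (t - τ) n * es n x - EE (s - τ) n * es n y) ^ 2) := by
      intro n
      rw [ofReal_integral_eq_lintegral_ofReal (F_sq_integrableOn t s x y 0 T n)
        (Filter.Eventually.of_forall fun τ => sq_nonneg _)]
      exact lintegral_congr fun τ => Real.enorm_eq_ofReal (sq_nonneg _)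
    have hle : ∑' n, ∫⁻ τ in Set.Ioc (0:ℝ) T,
        ‖(EE (t - τ) n * es n x - EE (s - τ) n * es n y) ^ 2‖₊
        ≤ ENNReal.ofReal (∑' n, M n) := by
      calc ∑' n, ∫⁻ τ in Set.Ioc (0:ℝ) T,
          ‖(EE (t - τ) n * es n x - EE (s - τ) n * es n y) ^ 2‖₊
          = ∑' n, ENNReal.ofReal (∫ τ in Set.Ioc (0:ℝ) T,
              (EE (t - τ) n * es n x - EE (s - τ) n * es n y) ^ 2) :=
            tsum_congr heach
        _ ≤ ∑' n, ENNReal.ofReal (M n) :=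
            ENNReal.tsum_le_tsum fun n => ENNReal.ofReal_le_ofReal (hkeyM n)
        _ = ENNReal.ofReal (∑' n, M n) :=
            (ENNReal.ofReal_tsum_of_nonneg hMnn hMsum).symm
    exact ne_top_of_le_ne_top ENNReal.ofReal_ne_top hle
  calc ∫ τ in Set.Ioc (0:ℝ) T, ∫ η in Set.Ioc (0:ℝ) 1,
        (heatKernel (t - τ) x η - heatKernel (s - τ) y η) ^ 2
      = ∫ τ in Set.Ioc (0:ℝ) T,
          ∑' n, (EE (t - τ) n * es n x - EE (s - τ) n * es n y) ^ 2 :=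
        integral_congr_ae (Filter.Eventually.of_forall fun τ => hinner τ)
    _ = ∑' n, ∫ τ in Set.Ioc (0:ℝ) T,
          (EE (t - τ) n * es n x - EE (s - τ) n * es n y) ^ 2 :=
        integral_tsum hmeasF hlt
    _ ≤ ∑' n, M n := Summable.tsum_le_tsum hkeyM
        (Summable.of_nonneg_of_le hFnn hkeyM hMsum) hMsum
    _ = (12 * ρ ^ β) * ∑' n, lam n ^ (β - 1) := tsum_mul_left
    _ = (12 * ∑' n, lam n ^ (β - 1)) * ρ ^ β := by ring
end
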